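/- arXiv:2006.14996 — 6 statements merged into one kernel-verified Lean document; each statement's English description precedes it below -/
import Mathlib

section
/- Let {P₁,P₂,P₃,P₄,…,P_m} be a set partition of [n] into m ≥ 4 nonempty parts. Then for every subset T ⊆ [n], ⟨{P₁∪P₂,P₃,P₄,…,P_m},T⟩ + ⟨{P₁,P₂,P₃∪P₄,…,P_m},T⟩ = ⟨{P₁∪P₃,P₂,P₄,…,P_m},T⟩ + ⟨{P₁,P₃,P₂∪P₄,…,P_m},T⟩. Consequently, for n ≥ 4 and 1 ≤ d ≤ n−4, R_{d,n} is contained in the kernel of φ̃_{d,n}, so φ̃_{d,n} descends to a linear map ℚSP_{d,n}/R_{d,n} → ℚK^d_n. -/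
/-! Common definitions: free ℚ-vector spaces on finite sets of subsets/partitions of
`[n] = {1,…,n}`, the pairing ⟨Π,T⟩, the maps φ̃, α, β, π̃*, π̃_*, odd, even, γ,
and the relation subspace `R_{d,n}`. -/

/-- `B` is a set partition of `[n] = {1,…,n}`: the parts are nonempty, pairwise
disjoint, and their union is `{1,…,n}`. -/
def IsPartition (n : ℕ) (B : Finset (Finset ℕ)) : Prop :=
  (∀ P ∈ B, P.Nonempty) ∧ (∀ P ∈ B, ∀ Q ∈ B, P ≠ Q → P ∩ Q = ∅) ∧
    B.sup id = Finset.Icc 1 n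

instance (n : ℕ) (B : Finset (Finset ℕ)) : Decidable (IsPartition n B) := by
  unfold IsPartition; infer_instance

/-- `SP_{d,n}`: the set of set partitions of `[n]` into exactly `d+3` nonempty parts. -/
def SPf (d : ℤ) (n : ℕ) : Finset (Finset (Finset ℕ)) :=
  ((Finset.Icc 1 n).powerset.powerset).filter
    (fun B => IsPartition n B ∧ (B.card : ℤ) = d + 3)

/-- `K^d_n = {T ⊆ [n] : |T| ≥ d+3, |T| ≡ d+3 (mod 2)}`. -/
def Kf (d : ℤ) (n : ℕ) : Finset (Finset ℕ) :=
  (Finset.Icc 1 n).powerset.filter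
    (fun T => d + 3 ≤ (T.card : ℤ) ∧ (T.card : ℤ) % 2 = (d + 3) % 2)

/-- The basis vector of the free vector space `ℚS = (↥S → ℚ)` corresponding to `a`
(the zero vector if `a ∉ S`). -/
def bvec {A : Type*} [DecidableEq A] (S : Finset A) (a : A) : ↥S → ℚ :=
  fun x => if x.val = a then 1 else 0

/-- The pairing `⟨B,T⟩`: `1` if `T` meets every part of `B`, else `0`. -/
def pairPT (B : Finset (Finset ℕ)) (T : Finset ℕ) : ℚ :=
  if ∀ P ∈ B, (P ∩ T).Nonempty then 1 else 0

/-- The linear map `φ̃_{d,n} : ℚSP_{d,n} → ℚK^d_n`, `Π ↦ Σ_{T ∈ K^d_n} ⟨Π,T⟩·T`. -/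
noncomputable def phiT (d : ℤ) (n : ℕ) : (↥(SPf d n) → ℚ) →ₗ[ℚ] (↥(Kf d n) → ℚ) :=
  Matrix.mulVecLin (Matrix.of fun T B => pairPT B.val T.val)

/-- Generic "insert `n+1`" map between free vector spaces on finite families of
subsets of `ℕ`: sends the basis vector of `T` to the basis vector of `T ∪ {n+1}`. -/
noncomputable def insMap (n : ℕ) (S S' : Finset (Finset ℕ)) :
    (↥S → ℚ) →ₗ[ℚ] (↥S' → ℚ) :=
  Matrix.mulVecLin (Matrix.of fun T' T =>
    if T'.val = insert (n+1) T.val then (1 : ℚ) else 0)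

/-- Generic "forget `n+1`" map: sends the basis vector of `T` to itself if
`n+1 ∉ T` and to `0` otherwise. -/
noncomputable def resMap (n : ℕ) (S S' : Finset (Finset ℕ)) :
    (↥S → ℚ) →ₗ[ℚ] (↥S' → ℚ) :=
  Matrix.mulVecLin (Matrix.of fun T' T =>
    if T.val = T'.val ∧ n+1 ∉ T.val then (1 : ℚ) else 0)

/-- `α : ℚK^d_n → ℚK^{d+1}_{n+1}`, `T ↦ T ∪ {n+1}`. -/
noncomputable def alphaK (d : ℤ) (n : ℕ) : (↥(Kf d n) → ℚ) →ₗ[ℚ] (↥(Kf (d+1) (n+1)) → ℚ) :=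
  insMap n (Kf d n) (Kf (d+1) (n+1))

/-- `β : ℚK^d_{n+1} → ℚK^d_n`, `T ↦ T` if `n+1 ∉ T`, else `T ↦ 0`. -/
noncomputable def betaK (d : ℤ) (n : ℕ) : (↥(Kf d (n+1)) → ℚ) →ₗ[ℚ] (↥(Kf d n) → ℚ) :=
  resMap n (Kf d (n+1)) (Kf d n)

/-- `π̃^* : ℚSP_{d,n} → ℚSP_{d+1,n+1}`, `Π ↦ Π ∪ {{n+1}}`. -/
noncomputable def piUp (d : ℤ) (n : ℕ) :
    (↥(SPf d n) → ℚ) →ₗ[ℚ] (↥(SPf (d+1) (n+1)) → ℚ) :=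
  Matrix.mulVecLin (Matrix.of fun B' B =>
    if B'.val = insert {n+1} B.val then (1 : ℚ) else 0)

/-- `π̃_* : ℚSP_{d,n+1} → ℚSP_{d,n}`: a partition `Π` of `[n+1]` goes to `0` if
`{n+1}` is a part of `Π`, and otherwise to `{P \ {n+1} : P ∈ Π}`. -/
noncomputable def piDown (d : ℤ) (n : ℕ) :
    (↥(SPf d (n+1)) → ℚ) →ₗ[ℚ] (↥(SPf d n) → ℚ) :=
  Matrix.mulVecLin (Matrix.of fun B' B =>
    if ({n+1} : Finset ℕ) ∉ B.val ∧
        B'.val = B.val.image (fun P => P.erase (n+1)) then (1 : ℚ) else 0)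

/-- The subspace `R_{d,n} ⊆ ℚSP_{d,n}` spanned by the Keel/Kontsevich–Manin type
relations: for every partition `S` of `[n]` with `d+4` parts and distinct parts
`P₁,P₂,P₃,P₄ ∈ S`, the element
`{P₁∪P₂,…} + {P₃∪P₄,…} − {P₁∪P₃,…} − {P₂∪P₄,…}`. -/
noncomputable def Rsub (d : ℤ) (n : ℕ) : Submodule ℚ (↥(SPf d n) → ℚ) :=
  Submodule.span ℚ { v | ∃ S : Finset (Finset ℕ), ∃ P1 P2 P3 P4 : Finset ℕ,
    IsPartition n S ∧ (S.card : ℤ) = d + 4 ∧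
    P1 ∈ S ∧ P2 ∈ S ∧ P3 ∈ S ∧ P4 ∈ S ∧
    P1 ≠ P2 ∧ P1 ≠ P3 ∧ P1 ≠ P4 ∧ P2 ≠ P3 ∧ P2 ≠ P4 ∧ P3 ≠ P4 ∧
    v = bvec (SPf d n) (insert (P1 ∪ P2) ((S.erase P1).erase P2))
      + bvec (SPf d n) (insert (P3 ∪ P4) ((S.erase P3).erase P4))
      - bvec (SPf d n) (insert (P1 ∪ P3) ((S.erase P1).erase P3))
      - bvec (SPf d n) (insert (P2 ∪ P4) ((S.erase P2).erase P4)) }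

/-- `F_n = {(P₁,P₂) : P₁ ∪ P₂ = [n], P₁ ∩ P₂ = ∅, 1 ∈ P₁}`. -/
def Fset (n : ℕ) : Finset (Finset ℕ × Finset ℕ) :=
  ((Finset.Icc 1 n).powerset ×ˢ (Finset.Icc 1 n).powerset).filter
    (fun p => p.1 ∪ p.2 = Finset.Icc 1 n ∧ p.1 ∩ p.2 = ∅ ∧ 1 ∈ p.1)

/-- `E_n`: subsets of `[n]` of even cardinality. -/
def Eset (n : ℕ) : Finset (Finset ℕ) :=
  (Finset.Icc 1 n).powerset.filter (fun T => T.card % 2 = 0)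

/-- `O_n`: subsets of `[n]` of odd cardinality. -/
def Oset (n : ℕ) : Finset (Finset ℕ) :=
  (Finset.Icc 1 n).powerset.filter (fun T => T.card % 2 = 1)

/-- `odd_n : ℚF_n → ℚO_n`, `(P₁,P₂) ↦ −Σ_{T⊆P₁, |T| odd} T + Σ_{T⊆P₂, |T| odd} T`. -/
noncomputable def oddMap (n : ℕ) : (↥(Fset n) → ℚ) →ₗ[ℚ] (↥(Oset n) → ℚ) :=
  Matrix.mulVecLin (Matrix.of fun T p =>
    (if T.val ⊆ p.val.1 then (-1 : ℚ) else 0) + (if T.val ⊆ p.val.2 then (1 : ℚ) else 0))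

/-- `even_n : ℚF_n → ℚE_n`, `(P₁,P₂) ↦ −Σ_{T⊆P₁, |T| even} T − Σ_{T⊆P₂, |T| even} T`. -/
noncomputable def evenMap (n : ℕ) : (↥(Fset n) → ℚ) →ₗ[ℚ] (↥(Eset n) → ℚ) :=
  Matrix.mulVecLin (Matrix.of fun T p =>
    (if T.val ⊆ p.val.1 then (-1 : ℚ) else 0) + (if T.val ⊆ p.val.2 then (-1 : ℚ) else 0))

/-- `γ : ℚF_n → ℚF_{n+1}`, `(P₁,P₂) ↦ (P₁∪{n+1},P₂) − (P₁,P₂∪{n+1})`. -/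
noncomputable def gammaMap (n : ℕ) : (↥(Fset n) → ℚ) →ₗ[ℚ] (↥(Fset (n+1)) → ℚ) :=
  Matrix.mulVecLin (Matrix.of fun q p =>
    (if q.val = (insert (n+1) p.val.1, p.val.2) then (1 : ℚ) else 0)
    - (if q.val = (p.val.1, insert (n+1) p.val.2) then (1 : ℚ) else 0))

/-- `π̃'_* : ℚF_{n+1} → ℚF_n`, `(P₁,P₂) ↦ (P₁∖{n+1}, P₂∖{n+1})`. -/
noncomputable def piDownF (n : ℕ) : (↥(Fset (n+1)) → ℚ) →ₗ[ℚ] (↥(Fset n) → ℚ) :=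
  Matrix.mulVecLin (Matrix.of fun q p =>
    if q.val = (p.val.1.erase (n+1), p.val.2.erase (n+1)) then (1 : ℚ) else 0)

section Aux

lemma finset_union_nonempty (A B : Finset ℕ) :
    (A ∪ B).Nonempty ↔ A.Nonempty ∨ B.Nonempty := by
  simp [Finset.Nonempty, Finset.mem_union, exists_or]

lemma pair_merge (S : Finset (Finset ℕ)) (P1 P2 : Finset ℕ) (T : Finset ℕ) :
    pairPT (insert (P1 ∪ P2) ((S.erase P1).erase P2)) T
      = if (((P1 ∩ T).Nonempty ∨ (P2 ∩ T).Nonempty) ∧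
          ∀ P ∈ S, P ≠ P1 → P ≠ P2 → (P ∩ T).Nonempty) then 1 else 0 := by
  unfold pairPT
  congr 1
  simp only [eq_iff_iff, Finset.forall_mem_insert, Finset.union_inter_distrib_right,
    finset_union_nonempty, Finset.mem_erase, and_imp]
  constructor
  · rintro ⟨hM, hE⟩
    exact ⟨hM, fun P hP hne1 hne2 => hE P hne2 hne1 hP⟩
  · rintro ⟨hM, hE⟩
    exact ⟨hM, fun P hne2 hne1 hP => hE P hP hne1 hne2⟩

lemma pairing_identity : ∀ (n : ℕ) (S : Finset (Finset ℕ)) (P1 P2 P3 P4 : Finset ℕ),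
      IsPartition n S → 4 ≤ S.card →
      P1 ∈ S → P2 ∈ S → P3 ∈ S → P4 ∈ S →
      P1 ≠ P2 → P1 ≠ P3 → P1 ≠ P4 → P2 ≠ P3 → P2 ≠ P4 → P3 ≠ P4 →
      ∀ T ⊆ Finset.Icc 1 n,
        pairPT (insert (P1 ∪ P2) ((S.erase P1).erase P2)) T
          + pairPT (insert (P3 ∪ P4) ((S.erase P3).erase P4)) T
        = pairPT (insert (P1 ∪ P3) ((S.erase P1).erase P3)) T
          + pairPT (insert (P2 ∪ P4) ((S.erase P2).erase P4)) T := by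
  intro n S P1 P2 P3 P4 _ _ h1 h2 h3 h4 n12 n13 n14 n23 n24 n34 T _
  rw [pair_merge S P1 P2 T, pair_merge S P3 P4 T,
    pair_merge S P1 P3 T, pair_merge S P2 P4 T]
  have key : ∀ (Pa Pb Pc Pd : Finset ℕ), Pc ∈ S → Pd ∈ S →
      Pa ≠ Pc → Pa ≠ Pd → Pb ≠ Pc → Pb ≠ Pd → Pc ≠ Pd →
      ({Pa, Pb, Pc, Pd} : Finset (Finset ℕ)) = {P1, P2, P3, P4} →
      ((∀ P ∈ S, P ≠ Pa → P ≠ Pb → (P ∩ T).Nonempty) ↔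
        ((Pc ∩ T).Nonempty ∧ (Pd ∩ T).Nonempty ∧
          ∀ P ∈ S, P ≠ P1 → P ≠ P2 → P ≠ P3 → P ≠ P4 → (P ∩ T).Nonempty)) := by
    intro Pa Pb Pc Pd hc hd nac nad nbc nbd ncd hset
    constructor
    · intro h
      refine ⟨h Pc hc (Ne.symm nac) (Ne.symm nbc), h Pd hd (Ne.symm nad) (Ne.symm nbd),
        fun P hP q1 q2 q3 q4 => ?_⟩
      have hPa : P ≠ Pa ∧ P ≠ Pb := by
        have : P ∉ ({Pa, Pb, Pc, Pd} : Finset (Finset ℕ)) := by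
          rw [hset]; simp [q1, q2, q3, q4]
        simp at this; exact ⟨this.1, this.2.1⟩
      exact h P hP hPa.1 hPa.2
    · rintro ⟨hc', hd', hrest⟩ P hP qa qb
      rcases eq_or_ne P Pc with rfl | qc
      · exact hc'
      rcases eq_or_ne P Pd with rfl | qd
      · exact hd'
      have : P ∉ ({Pa, Pb, Pc, Pd} : Finset (Finset ℕ)) := by simp [qa, qb, qc, qd]
      rw [hset] at this; simp at this
      exact hrest P hP this.1 this.2.1 this.2.2.1 this.2.2.2
  simp only [key P1 P2 P3 P4 h3 h4 n13 n14 n23 n24 n34 rfl,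
    key P3 P4 P1 P2 h1 h2 (Ne.symm n13) (Ne.symm n23) (Ne.symm n14) (Ne.symm n24) n12
      (by ext x; simp; tauto),
    key P1 P3 P2 P4 h2 h4 n12 n14 (Ne.symm n23) n34 n24 (by ext x; simp; tauto),
    key P2 P4 P1 P3 h1 h3 (Ne.symm n12) n23 (Ne.symm n14) (Ne.symm n34) n13
      (by ext x; simp; tauto)]
  by_cases a1 : (P1 ∩ T).Nonempty <;> by_cases a2 : (P2 ∩ T).Nonempty <;>
    by_cases a3 : (P3 ∩ T).Nonempty <;> by_cases a4 : (P4 ∩ T).Nonempty <;>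
    by_cases c : ∀ P ∈ S, P ≠ P1 → P ≠ P2 → P ≠ P3 → P ≠ P4 → (P ∩ T).Nonempty <;>
    simp [a1, a2, a3, a4, c]

end Aux
lemma mem_SPf (d : ℤ) (n : ℕ) (B : Finset (Finset ℕ)) (hB : IsPartition n B)
    (hc : (B.card : ℤ) = d + 3) : B ∈ SPf d n := by
  refine Finset.mem_filter.mpr ⟨?_, hB, hc⟩
  rw [Finset.mem_powerset]
  intro P hP
  rw [Finset.mem_powerset]
  exact hB.2.2 ▸ Finset.le_sup (f := id) hP

lemma merge_isPartition (n : ℕ) (S : Finset (Finset ℕ)) (P1 P2 : Finset ℕ)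
    (hS : IsPartition n S) (h1 : P1 ∈ S) (h2 : P2 ∈ S) (hne : P1 ≠ P2) :
    IsPartition n (insert (P1 ∪ P2) ((S.erase P1).erase P2)) := by
  obtain ⟨hne', hdisj, hsup⟩ := hS
  have hmemE : ∀ P ∈ (S.erase P1).erase P2, P ∈ S ∧ P ≠ P1 ∧ P ≠ P2 := by
    intro P hP; simp only [Finset.mem_erase] at hP; exact ⟨hP.2.2, hP.2.1, hP.1⟩
  refine ⟨?_, ?_, ?_⟩
  · intro P hP
    rcases Finset.mem_insert.mp hP with rfl | hP
    · exact (hne' P1 h1).mono Finset.subset_union_left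
    · exact hne' P ((hmemE P hP).1)
  · intro P hP Q hQ hPQ
    rcases Finset.mem_insert.mp hP with rfl | hP <;>
      rcases Finset.mem_insert.mp hQ with rfl | hQ
    · exact absurd rfl hPQ
    · obtain ⟨hQS, hQ1, hQ2⟩ := hmemE Q hQ
      rw [Finset.union_inter_distrib_right, hdisj P1 h1 Q hQS (Ne.symm hQ1),
        hdisj P2 h2 Q hQS (Ne.symm hQ2), Finset.union_empty]
    · obtain ⟨hPS, hP1, hP2⟩ := hmemE P hP
      rw [Finset.inter_union_distrib_left, hdisj P hPS P1 h1 hP1,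
        hdisj P hPS P2 h2 hP2, Finset.union_empty]
    · exact hdisj P (hmemE P hP).1 Q (hmemE Q hQ).1 hPQ
  · have hP2' : P2 ∈ S.erase P1 := Finset.mem_erase.mpr ⟨Ne.symm hne, h2⟩
    have hdec : S = insert P1 (insert P2 ((S.erase P1).erase P2)) := by
      rw [Finset.insert_erase hP2', Finset.insert_erase h1]
    rw [Finset.sup_insert, ← hsup]
    conv_rhs => rw [hdec]
    rw [Finset.sup_insert, Finset.sup_insert]
    simp only [id_eq, Finset.sup_eq_union]
    rw [Finset.union_assoc]

lemma merge_mem_SPf (d : ℤ) (n : ℕ) (S : Finset (Finset ℕ)) (P1 P2 : Finset ℕ)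
    (hS : IsPartition n S) (hc : (S.card : ℤ) = d + 4) (h1 : P1 ∈ S) (h2 : P2 ∈ S)
    (hne : P1 ≠ P2) : insert (P1 ∪ P2) ((S.erase P1).erase P2) ∈ SPf d n := by
  refine mem_SPf d n _ (merge_isPartition n S P1 P2 hS h1 h2 hne) ?_
  have hnotmem : (P1 ∪ P2) ∉ (S.erase P1).erase P2 := by
    intro hmem
    simp only [Finset.mem_erase] at hmem
    have := hS.2.1 P1 h1 (P1 ∪ P2) hmem.2.2 (fun h => hmem.2.1 h.symm)
    have hP1 := hS.1 P1 h1
    rw [Finset.inter_eq_left.mpr Finset.subset_union_left] at this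
    exact hP1.ne_empty this
  have hP2' : P2 ∈ S.erase P1 := Finset.mem_erase.mpr ⟨Ne.symm hne, h2⟩
  have hcard2 : 2 ≤ S.card := Finset.one_lt_card.mpr ⟨P1, h1, P2, h2, hne⟩
  rw [Finset.card_insert_of_notMem hnotmem, Finset.card_erase_of_mem hP2',
    Finset.card_erase_of_mem h1]
  omega

lemma phiT_bvec (d : ℤ) (n : ℕ) (B : Finset (Finset ℕ)) (hB : B ∈ SPf d n) :
    phiT d n (bvec (SPf d n) B) = fun T => pairPT B T.val := by
  funext T
  simp only [phiT, Matrix.mulVecLin_apply, Matrix.mulVec, dotProduct, Matrix.of_apply, bvec]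
  rw [Finset.sum_eq_single (⟨B, hB⟩ : ↥(SPf d n))]
  · simp
  · intro b _ hb
    have : b.val ≠ B := fun h => hb (Subtype.ext h)
    simp [this]
  · intro h; exact absurd (Finset.mem_univ _) h

lemma part2 : ∀ (n : ℕ) (d : ℤ), 4 ≤ n → 1 ≤ d → d ≤ (n : ℤ) - 4 →
    Rsub d n ≤ LinearMap.ker (phiT d n) := by
  intro n d _ hd _
  rw [Rsub, Submodule.span_le]
  rintro v ⟨S, P1, P2, P3, P4, hS, hc, h1, h2, h3, h4, n12, n13, n14, n23, n24, n34, rfl⟩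
  simp only [SetLike.mem_coe, LinearMap.mem_ker, map_add, map_sub]
  rw [phiT_bvec d n _ (merge_mem_SPf d n S P1 P2 hS hc h1 h2 n12),
    phiT_bvec d n _ (merge_mem_SPf d n S P3 P4 hS hc h3 h4 n34),
    phiT_bvec d n _ (merge_mem_SPf d n S P1 P3 hS hc h1 h3 n13),
    phiT_bvec d n _ (merge_mem_SPf d n S P2 P4 hS hc h2 h4 n24)]
  funext T
  have hT : T.val ⊆ Finset.Icc 1 n := by
    have := T.property
    simp only [Kf, Finset.mem_filter, Finset.mem_powerset] at this
    exact this.1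
  have hcard : 4 ≤ S.card := by omega
  have := pairing_identity n S P1 P2 P3 P4 hS hcard h1 h2 h3 h4 n12 n13 n14 n23 n24 n34
    T.val hT
  simp only [Pi.add_apply, Pi.sub_apply, Pi.zero_apply]
  linarith
/-- The pairing identity for the four merged partitions, and the
consequence that `R_{d,n} ⊆ ker φ̃_{d,n}` for `n ≥ 4`, `1 ≤ d ≤ n−4`. -/
theorem statement2 :
    (∀ (n : ℕ) (S : Finset (Finset ℕ)) (P1 P2 P3 P4 : Finset ℕ),
      IsPartition n S → 4 ≤ S.card →
      P1 ∈ S → P2 ∈ S → P3 ∈ S → P4 ∈ S →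
      P1 ≠ P2 → P1 ≠ P3 → P1 ≠ P4 → P2 ≠ P3 → P2 ≠ P4 → P3 ≠ P4 →
      ∀ T ⊆ Finset.Icc 1 n,
        pairPT (insert (P1 ∪ P2) ((S.erase P1).erase P2)) T
          + pairPT (insert (P3 ∪ P4) ((S.erase P3).erase P4)) T
        = pairPT (insert (P1 ∪ P3) ((S.erase P1).erase P3)) T
          + pairPT (insert (P2 ∪ P4) ((S.erase P2).erase P4)) T) ∧
    (∀ (n : ℕ) (d : ℤ), 4 ≤ n → 1 ≤ d → d ≤ (n : ℤ) - 4 →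
      Rsub d n ≤ LinearMap.ker (phiT d n)) := by
  exact ⟨pairing_identity, part2⟩
end

section
/- Let n ≥ 4 and 1 ≤ d ≤ n−4. Then π̃*(R_{d,n}) ⊆ R_{d+1,n+1} and π̃_*(R_{d,n+1}) ⊆ R_{d,n}. Consequently π̃* and π̃_* descend to well-defined linear maps π^* : ℚSP_{d,n}/R_{d,n} → ℚSP_{d+1,n+1}/R_{d+1,n+1} and π_* : ℚSP_{d,n+1}/R_{d,n+1} → ℚSP_{d,n}/R_{d,n} on the quotient spaces. -/
namespace S3aux

open Finset

variable {n : ℕ} {S : Finset (Finset ℕ)}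

lemma part_subset (h : IsPartition n S) {P : Finset ℕ} (hP : P ∈ S) : P ⊆ Finset.Icc 1 n := by
  have h1 : id P ≤ S.sup id := Finset.le_sup hP
  rw [h.2.2] at h1
  exact h1

lemma notMem_part (h : IsPartition n S) {P : Finset ℕ} (hP : P ∈ S) : n + 1 ∉ P := by
  intro hx
  have := part_subset h hP hx
  simp [Finset.mem_Icc] at this

lemma singleton_notMem (h : IsPartition n S) : ({n+1} : Finset ℕ) ∉ S := fun hs =>
  notMem_part h hs (by simp)

lemma mem_icc_iff (h : IsPartition n S) (x : ℕ) :
    x ∈ Finset.Icc 1 n ↔ ∃ P ∈ S, x ∈ P := by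
  rw [← h.2.2]; simp [Finset.mem_sup]

lemma mem_SPf_iff {d : ℤ} {B : Finset (Finset ℕ)} :
    B ∈ SPf d n ↔ IsPartition n B ∧ (B.card : ℤ) = d + 3 := by
  constructor
  · intro h; exact (Finset.mem_filter.mp h).2
  · intro h
    refine Finset.mem_filter.mpr ⟨?_, h⟩
    simp only [Finset.mem_powerset]
    intro P hP
    simp only [Finset.mem_powerset]
    exact part_subset h.1 hP

lemma union_notMem (h : IsPartition n S) {X Y : Finset ℕ} (hX : X ∈ S) (hXY : X ≠ Y) :
    X ∪ Y ∉ (S.erase X).erase Y := by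
  intro hmem
  have hZS : X ∪ Y ∈ S := Finset.mem_of_mem_erase (Finset.mem_of_mem_erase hmem)
  have hZX : X ∪ Y ≠ X := (Finset.mem_erase.mp (Finset.mem_of_mem_erase hmem)).1
  have hdisj := h.2.1 X hX (X ∪ Y) hZS (Ne.symm hZX)
  obtain ⟨x, hx⟩ := h.1 X hX
  have : x ∈ X ∩ (X ∪ Y) := Finset.mem_inter.mpr ⟨hx, Finset.mem_union_left _ hx⟩
  rw [hdisj] at this
  exact absurd this (Finset.notMem_empty x)

lemma merge_isPartition (h : IsPartition n S) {X Y : Finset ℕ} (hX : X ∈ S) (hY : Y ∈ S)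
    (hXY : X ≠ Y) : IsPartition n (insert (X ∪ Y) ((S.erase X).erase Y)) := by
  obtain ⟨h1, h2, h3⟩ := h
  refine ⟨?_, ?_, ?_⟩
  · intro P hP
    rcases Finset.mem_insert.mp hP with rfl | hP
    · obtain ⟨x, hx⟩ := h1 X hX; exact ⟨x, Finset.mem_union_left _ hx⟩
    · exact h1 P (Finset.mem_of_mem_erase (Finset.mem_of_mem_erase hP))
  · have key : ∀ Q ∈ (S.erase X).erase Y, (X ∪ Y) ∩ Q = ∅ := by
      intro Q hQ
      have hQS := Finset.mem_of_mem_erase (Finset.mem_of_mem_erase hQ)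
      have hQY : Q ≠ Y := (Finset.mem_erase.mp hQ).1
      have hQX : Q ≠ X := (Finset.mem_erase.mp (Finset.mem_of_mem_erase hQ)).1
      have e1 := h2 X hX Q hQS (Ne.symm hQX)
      have e2 := h2 Y hY Q hQS (Ne.symm hQY)
      rw [Finset.union_inter_distrib_right, e1, e2, Finset.union_empty]
    intro P hP Q hQ hPQ
    rcases Finset.mem_insert.mp hP with rfl | hP' <;> rcases Finset.mem_insert.mp hQ with rfl | hQ'
    · exact absurd rfl hPQ
    · exact key Q hQ'
    · rw [Finset.inter_comm]; exact key P hP'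
    · exact h2 P (Finset.mem_of_mem_erase (Finset.mem_of_mem_erase hP')) Q
        (Finset.mem_of_mem_erase (Finset.mem_of_mem_erase hQ')) hPQ
  · ext x
    simp only [Finset.mem_sup, id]
    rw [show (x ∈ Finset.Icc 1 n ↔ ∃ P ∈ S, x ∈ P) from by rw [← h3]; simp [Finset.mem_sup]]
    constructor
    · rintro ⟨P, hP, hx⟩
      rcases Finset.mem_insert.mp hP with rfl | hP'
      · rcases Finset.mem_union.mp hx with hx | hx
        · exact ⟨X, hX, hx⟩
        · exact ⟨Y, hY, hx⟩
      · exact ⟨P, Finset.mem_of_mem_erase (Finset.mem_of_mem_erase hP'), hx⟩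
    · rintro ⟨P, hP, hxP⟩
      by_cases hPX : P = X
      · exact ⟨X ∪ Y, Finset.mem_insert_self _ _, Finset.mem_union_left _ (hPX ▸ hxP)⟩
      by_cases hPY : P = Y
      · exact ⟨X ∪ Y, Finset.mem_insert_self _ _, Finset.mem_union_right _ (hPY ▸ hxP)⟩
      · exact ⟨P, Finset.mem_insert_of_mem
          (Finset.mem_erase.mpr ⟨hPY, Finset.mem_erase.mpr ⟨hPX, hP⟩⟩), hxP⟩

lemma merge_card (h : IsPartition n S) {X Y : Finset ℕ} (hX : X ∈ S) (hY : Y ∈ S)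
    (hXY : X ≠ Y) : (insert (X ∪ Y) ((S.erase X).erase Y)).card = S.card - 1 := by
  rw [Finset.card_insert_of_notMem (union_notMem h hX hXY),
      Finset.card_erase_of_mem (Finset.mem_erase.mpr ⟨Ne.symm hXY, hY⟩),
      Finset.card_erase_of_mem hX]
  have : 1 < S.card := Finset.one_lt_card.mpr ⟨X, hX, Y, hY, hXY⟩
  omega

lemma merge_mem_SPf {d : ℤ} (h : IsPartition n S) (hcard : (S.card : ℤ) = d + 4)
    {X Y : Finset ℕ} (hX : X ∈ S) (hY : Y ∈ S) (hXY : X ≠ Y) :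
    insert (X ∪ Y) ((S.erase X).erase Y) ∈ SPf d n := by
  refine mem_SPf_iff.mpr ⟨merge_isPartition h hX hY hXY, ?_⟩
  rw [merge_card h hX hY hXY]
  have h2 : 1 < S.card := Finset.one_lt_card.mpr ⟨X, hX, Y, hY, hXY⟩
  omega

lemma mulVecLin_bvec {A : Type*} [DecidableEq A] {S S' : Finset A} (M : ↥S' → ↥S → ℚ)
    {a : A} (ha : a ∈ S) :
    Matrix.mulVecLin (Matrix.of M) (bvec S a) = fun b' => M b' ⟨a, ha⟩ := by
  funext b'
  simp only [Matrix.mulVecLin_apply, Matrix.mulVec, dotProduct, Matrix.of_apply, bvec,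
    mul_ite, mul_one, mul_zero]
  have hiff : ∀ x : ↥S, (x.val = a) = (x = ⟨a, ha⟩) := fun x => by
    rw [eq_iff_iff]
    exact ⟨fun h => Subtype.ext h, fun h => by rw [h]⟩
  simp only [hiff]
  simp

lemma piUp_bvec {d : ℤ} {n : ℕ} {a : Finset (Finset ℕ)} (ha : a ∈ SPf d n) :
    piUp d n (bvec (SPf d n) a) = bvec (SPf (d+1) (n+1)) (insert {n+1} a) := by
  unfold piUp
  rw [mulVecLin_bvec _ ha]
  rfl

lemma piDown_bvec {d : ℤ} {n : ℕ} {a : Finset (Finset ℕ)} (ha : a ∈ SPf d (n+1))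
    (hns : ({n+1} : Finset ℕ) ∉ a) :
    piDown d n (bvec (SPf d (n+1)) a)
      = bvec (SPf d n) (a.image (fun P => P.erase (n+1))) := by
  unfold piDown
  rw [mulVecLin_bvec _ ha]
  funext B'
  simp [bvec, hns]

lemma piDown_bvec_zero {d : ℤ} {n : ℕ} {a : Finset (Finset ℕ)} (ha : a ∈ SPf d (n+1))
    (hns : ({n+1} : Finset ℕ) ∈ a) :
    piDown d n (bvec (SPf d (n+1)) a) = 0 := by
  unfold piDown
  rw [mulVecLin_bvec _ ha]
  funext B'
  simp [hns]

lemma mrg_comm (S : Finset (Finset ℕ)) (X Y : Finset ℕ) :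
    insert (X ∪ Y) ((S.erase X).erase Y) = insert (Y ∪ X) ((S.erase Y).erase X) := by
  rw [Finset.union_comm, Finset.erase_right_comm]

lemma insert_sing_isPartition (hS : IsPartition n S) :
    IsPartition (n+1) (insert {n+1} S) := by
  refine ⟨?_, ?_, ?_⟩
  · intro P hP
    rcases Finset.mem_insert.mp hP with rfl | h
    · exact ⟨n+1, Finset.mem_singleton_self _⟩
    · exact hS.1 P h
  · have key : ∀ R ∈ S, ({n+1} : Finset ℕ) ∩ R = ∅ := by
      intro R hR
      ext x
      simp only [Finset.mem_inter, Finset.mem_singleton, Finset.notMem_empty, iff_false,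
        not_and]
      rintro rfl
      exact notMem_part hS hR
    intro P hP Q hQ hPQ
    rcases Finset.mem_insert.mp hP with rfl | hP' <;> rcases Finset.mem_insert.mp hQ with rfl | hQ'
    · exact absurd rfl hPQ
    · exact key Q hQ'
    · rw [Finset.inter_comm]; exact key P hP'
    · exact hS.2.1 P hP' Q hQ' hPQ
  · rw [Finset.sup_insert, hS.2.2]
    ext x
    simp only [id, Finset.sup_eq_union, Finset.mem_union, Finset.mem_singleton, Finset.mem_Icc]
    omega

lemma eP_nonempty (hS : IsPartition (n+1) S) (hns : ({n+1} : Finset ℕ) ∉ S)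
    {P : Finset ℕ} (hP : P ∈ S) : (P.erase (n+1)).Nonempty := by
  by_contra hc
  rw [Finset.not_nonempty_iff_eq_empty] at hc
  have hsub : P ⊆ {n+1} := by
    intro y hy
    by_cases hyn : y = n+1
    · simp [hyn]
    · exact absurd (hc ▸ Finset.mem_erase.mpr ⟨hyn, hy⟩) (Finset.notMem_empty y)
  rcases Finset.subset_singleton_iff.mp hsub with h0 | h1
  · exact (hS.1 P hP).ne_empty h0
  · exact hns (h1 ▸ hP)

lemma injOn_erase (hS : IsPartition (n+1) S) (hns : ({n+1} : Finset ℕ) ∉ S) :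
    Set.InjOn (fun P : Finset ℕ => P.erase (n+1)) ↑S := by
  intro P hP Q hQ hPQeq
  by_contra hne
  have hdisj := hS.2.1 P (Finset.mem_coe.mp hP) Q (Finset.mem_coe.mp hQ) hne
  obtain ⟨x, hx⟩ := eP_nonempty hS hns (Finset.mem_coe.mp hP)
  change P.erase (n+1) = Q.erase (n+1) at hPQeq
  have hx2 : x ∈ Q.erase (n+1) := by rw [← hPQeq]; exact hx
  have : x ∈ P ∩ Q := Finset.mem_inter.mpr
    ⟨Finset.erase_subset _ _ hx, Finset.erase_subset _ _ hx2⟩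
  rw [hdisj] at this
  exact absurd this (Finset.notMem_empty x)

lemma image_isPartition (hS : IsPartition (n+1) S) (hns : ({n+1} : Finset ℕ) ∉ S) :
    IsPartition n (S.image (fun P => P.erase (n+1))) := by
  refine ⟨?_, ?_, ?_⟩
  · intro P' hP'
    obtain ⟨P, hP, rfl⟩ := Finset.mem_image.mp hP'
    exact eP_nonempty hS hns hP
  · intro A hA B hB hAB
    obtain ⟨P, hP, rfl⟩ := Finset.mem_image.mp hA
    obtain ⟨Q, hQ, rfl⟩ := Finset.mem_image.mp hB
    have hPQ : P ≠ Q := fun h => hAB (by rw [h])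
    have hdisj := hS.2.1 P hP Q hQ hPQ
    refine Finset.eq_empty_of_forall_notMem ?_
    intro x hx
    obtain ⟨hx1, hx2⟩ := Finset.mem_inter.mp hx
    have : x ∈ P ∩ Q := Finset.mem_inter.mpr
      ⟨Finset.erase_subset _ _ hx1, Finset.erase_subset _ _ hx2⟩
    rw [hdisj] at this
    exact absurd this (Finset.notMem_empty x)
  · ext x
    simp only [Finset.mem_sup, id]
    constructor
    · rintro ⟨P', hP', hx⟩
      obtain ⟨P, hP, rfl⟩ := Finset.mem_image.mp hP'
      have hx1 : x ∈ P := Finset.erase_subset _ _ hx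
      have hxn : x ≠ n+1 := (Finset.mem_erase.mp hx).1
      have := part_subset hS hP hx1
      simp only [Finset.mem_Icc] at this ⊢
      omega
    · intro hx
      have hx' : x ∈ Finset.Icc 1 (n+1) := by
        simp only [Finset.mem_Icc] at hx ⊢; omega
      obtain ⟨P, hP, hxP⟩ := (mem_icc_iff hS x).mp hx'
      have hxn : x ≠ n+1 := by
        simp only [Finset.mem_Icc] at hx; omega
      exact ⟨P.erase (n+1), Finset.mem_image_of_mem _ hP, Finset.mem_erase.mpr ⟨hxn, hxP⟩⟩

lemma image_erase_comm {e : Finset ℕ → Finset ℕ} {S : Finset (Finset ℕ)}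
    (hinj : Set.InjOn e ↑S) {P : Finset ℕ} (hP : P ∈ S) :
    (S.erase P).image e = (S.image e).erase (e P) := by
  ext x
  simp only [Finset.mem_image, Finset.mem_erase]
  constructor
  · rintro ⟨Q, ⟨hQP, hQS⟩, rfl⟩
    exact ⟨fun h => hQP (hinj (Finset.mem_coe.mpr hQS) (Finset.mem_coe.mpr hP) h),
      Q, hQS, rfl⟩
  · rintro ⟨hne, Q, hQS, rfl⟩
    exact ⟨Q, ⟨fun h => hne (by rw [h]), hQS⟩, rfl⟩

lemma erase_union_distrib' (s t : Finset ℕ) (a : ℕ) :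
    (s ∪ t).erase a = s.erase a ∪ t.erase a := by
  ext x
  simp only [Finset.mem_erase, Finset.mem_union]
  tauto

lemma image_merge (hS : IsPartition (n+1) S) (hns : ({n+1} : Finset ℕ) ∉ S)
    {X Y : Finset ℕ} (hX : X ∈ S) (hY : Y ∈ S) (hXY : X ≠ Y) :
    (insert (X ∪ Y) ((S.erase X).erase Y)).image (fun P => P.erase (n+1))
      = insert (X.erase (n+1) ∪ Y.erase (n+1))
          (((S.image (fun P => P.erase (n+1))).erase (X.erase (n+1))).erase (Y.erase (n+1))) := by
  rw [Finset.image_insert]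
  have hinj := injOn_erase hS hns
  have hsub : (↑(S.erase X) : Set (Finset ℕ)) ⊆ (↑S : Set (Finset ℕ)) := by
    intro z hz
    exact Finset.mem_coe.mpr (Finset.mem_of_mem_erase (Finset.mem_coe.mp hz))
  have hinj' : Set.InjOn (fun P : Finset ℕ => P.erase (n+1)) ↑(S.erase X) := hinj.mono hsub
  rw [image_erase_comm hinj' (Finset.mem_erase.mpr ⟨Ne.symm hXY, hY⟩),
      image_erase_comm hinj hX]
  congr 1
  exact erase_union_distrib' X Y (n+1)

lemma sing_notMem_merge (hS : IsPartition (n+1) S) (hns : ({n+1} : Finset ℕ) ∉ S)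
    {X Y : Finset ℕ} (hX : X ∈ S) :
    ({n+1} : Finset ℕ) ∉ insert (X ∪ Y) ((S.erase X).erase Y) := by
  intro h
  rcases Finset.mem_insert.mp h with h | h
  · have hXsub : X ⊆ ({n+1} : Finset ℕ) := by
      rw [h]; exact Finset.subset_union_left
    rcases Finset.subset_singleton_iff.mp hXsub with h0 | h1
    · exact (hS.1 X hX).ne_empty h0
    · exact hns (h1 ▸ hX)
  · exact hns (Finset.mem_of_mem_erase (Finset.mem_of_mem_erase h))

lemma sing_merge_image (hS : IsPartition (n+1) S) {X Y : Finset ℕ}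
    (hX : X ∈ S) (hY : Y ∈ S) (hXY : X ≠ Y) (hXs : X = {n+1}) :
    (insert (X ∪ Y) ((S.erase X).erase Y)).image (fun P => P.erase (n+1)) = S.erase X := by
  have hn1Y : (n+1) ∉ Y := by
    intro hmem
    have hdisj := hS.2.1 X hX Y hY hXY
    have : (n+1) ∈ X ∩ Y := Finset.mem_inter.mpr ⟨by rw [hXs]; simp, hmem⟩
    rw [hdisj] at this
    exact absurd this (Finset.notMem_empty _)
  have hkey : ∀ P ∈ (S.erase X).erase Y, (n+1) ∉ P := by
    intro P hP hmem
    have hPS := Finset.mem_of_mem_erase (Finset.mem_of_mem_erase hP)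
    have hPX : P ≠ X := (Finset.mem_erase.mp (Finset.mem_of_mem_erase hP)).1
    have hdisj := hS.2.1 P hPS X hX hPX
    have : (n+1) ∈ P ∩ X := Finset.mem_inter.mpr ⟨hmem, by rw [hXs]; simp⟩
    rw [hdisj] at this
    exact absurd this (Finset.notMem_empty _)
  rw [Finset.image_insert]
  have h1 : (X ∪ Y).erase (n+1) = Y := by
    subst hXs
    ext x
    simp only [Finset.mem_erase, Finset.mem_union, Finset.mem_singleton]
    constructor
    · rintro ⟨hne, h | h⟩
      · exact absurd h hne
      · exact h
    · intro hx
      exact ⟨fun h => hn1Y (h ▸ hx), Or.inr hx⟩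
  have h2 : ((S.erase X).erase Y).image (fun P => P.erase (n+1)) = (S.erase X).erase Y := by
    rw [Finset.image_congr (g := id), Finset.image_id]
    intro P hP
    exact Finset.erase_eq_of_notMem (hkey P (Finset.mem_coe.mp hP))
  rw [h1, h2]
  exact Finset.insert_erase (Finset.mem_erase.mpr ⟨fun h => hXY h.symm, hY⟩)

end S3aux

/-- For `n ≥ 4` and `1 ≤ d ≤ n−4`: `π̃^*(R_{d,n}) ⊆ R_{d+1,n+1}`,
`π̃_*(R_{d,n+1}) ⊆ R_{d,n}`, and hence `π̃^*`, `π̃_*` descend to linear maps on the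
quotients by the subspaces `R`. -/
theorem statement3 (n : ℕ) (d : ℤ) (hn : 4 ≤ n) (hd1 : 1 ≤ d) (hd2 : d ≤ (n : ℤ) - 4) :
    Submodule.map (piUp d n) (Rsub d n) ≤ Rsub (d+1) (n+1) ∧
    Submodule.map (piDown d n) (Rsub d (n+1)) ≤ Rsub d n ∧
    (∃ g : ((↥(SPf d n) → ℚ) ⧸ Rsub d n) →ₗ[ℚ]
        ((↥(SPf (d+1) (n+1)) → ℚ) ⧸ Rsub (d+1) (n+1)),
      ∀ x, g (Submodule.Quotient.mk x) = Submodule.Quotient.mk (piUp d n x)) ∧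
    (∃ g : ((↥(SPf d (n+1)) → ℚ) ⧸ Rsub d (n+1)) →ₗ[ℚ]
        ((↥(SPf d n) → ℚ) ⧸ Rsub d n),
      ∀ x, g (Submodule.Quotient.mk x) = Submodule.Quotient.mk (piDown d n x)) := by
  classical
  have hup : Submodule.map (piUp d n) (Rsub d n) ≤ Rsub (d+1) (n+1) := by
    rw [Rsub, Submodule.map_span, Submodule.span_le]
    rintro w ⟨v, ⟨S, P1, P2, P3, P4, hS, hcard, h1, h2, h3, h4, h12, h13, h14, h23, h24,
      h34, rfl⟩, rfl⟩
    apply Submodule.subset_span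
    have hs1 : ({n+1} : Finset ℕ) ∉ S := S3aux.singleton_notMem hS
    have hne : ∀ X, X ∈ S → ({n+1} : Finset ℕ) ≠ X := by
      intro X hX h
      exact S3aux.notMem_part hS hX (h ▸ Finset.mem_singleton_self _)
    have hins : ∀ X Y : Finset ℕ, X ∈ S → Y ∈ S →
        insert (X ∪ Y) (((insert ({n+1} : Finset ℕ) S).erase X).erase Y)
          = insert ({n+1} : Finset ℕ) (insert (X ∪ Y) ((S.erase X).erase Y)) := by
      intro X Y hX hY
      rw [Finset.erase_insert_of_ne (hne X hX), Finset.erase_insert_of_ne (hne Y hY),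
        Finset.insert_comm]
    refine ⟨insert {n+1} S, P1, P2, P3, P4, S3aux.insert_sing_isPartition hS, ?_,
      Finset.mem_insert_of_mem h1, Finset.mem_insert_of_mem h2, Finset.mem_insert_of_mem h3,
      Finset.mem_insert_of_mem h4, h12, h13, h14, h23, h24, h34, ?_⟩
    · rw [Finset.card_insert_of_notMem hs1]; push_cast; omega
    · rw [hins P1 P2 h1 h2, hins P3 P4 h3 h4, hins P1 P3 h1 h3, hins P2 P4 h2 h4]
      simp only [map_add, map_sub]
      rw [S3aux.piUp_bvec (S3aux.merge_mem_SPf hS hcard h1 h2 h12),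
          S3aux.piUp_bvec (S3aux.merge_mem_SPf hS hcard h3 h4 h34),
          S3aux.piUp_bvec (S3aux.merge_mem_SPf hS hcard h1 h3 h13),
          S3aux.piUp_bvec (S3aux.merge_mem_SPf hS hcard h2 h4 h24)]
  have hdown : Submodule.map (piDown d n) (Rsub d (n+1)) ≤ Rsub d n := by
    rw [Rsub, Submodule.map_span, Submodule.span_le]
    rintro w ⟨v, ⟨S, P1, P2, P3, P4, hS, hcard, h1, h2, h3, h4, h12, h13, h14, h23, h24,
      h34, rfl⟩, rfl⟩
    simp only [SetLike.mem_coe, map_add, map_sub]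
    by_cases hsing : ({n+1} : Finset ℕ) ∈ S
    · have hzero : ∀ X Y : Finset ℕ, X ∈ S → Y ∈ S → X ≠ Y →
          ({n+1} : Finset ℕ) ≠ X → ({n+1} : Finset ℕ) ≠ Y →
          piDown d n (bvec (SPf d (n+1)) (insert (X ∪ Y) ((S.erase X).erase Y))) = 0 := by
        intro X Y hX hY hXY hnX hnY
        exact S3aux.piDown_bvec_zero (S3aux.merge_mem_SPf hS hcard hX hY hXY)
          (Finset.mem_insert_of_mem
            (Finset.mem_erase.mpr ⟨hnY, Finset.mem_erase.mpr ⟨hnX, hsing⟩⟩))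
      have hval : ∀ X Y : Finset ℕ, X ∈ S → Y ∈ S → X ≠ Y → X = {n+1} →
          piDown d n (bvec (SPf d (n+1)) (insert (X ∪ Y) ((S.erase X).erase Y)))
            = bvec (SPf d n) (S.erase X) := by
        intro X Y hX hY hXY hXs
        have hnm : ({n+1} : Finset ℕ) ∉ insert (X ∪ Y) ((S.erase X).erase Y) := by
          intro hmem
          rcases Finset.mem_insert.mp hmem with h | h
          · obtain ⟨y, hy⟩ := hS.1 Y hY
            have hyX : y ∈ X ∪ Y := Finset.mem_union_right _ hy
            rw [← h] at hyX
            have hyn : y = n+1 := Finset.mem_singleton.mp hyX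
            have hdisj := hS.2.1 X hX Y hY hXY
            have hmm : (n+1) ∈ X ∩ Y :=
              Finset.mem_inter.mpr ⟨by rw [hXs]; exact Finset.mem_singleton_self _, hyn ▸ hy⟩
            rw [hdisj] at hmm
            exact absurd hmm (Finset.notMem_empty _)
          · exact (Finset.mem_erase.mp (Finset.mem_of_mem_erase h)).1 hXs.symm
        rw [S3aux.piDown_bvec (S3aux.merge_mem_SPf hS hcard hX hY hXY) hnm,
            S3aux.sing_merge_image hS hX hY hXY hXs]
      by_cases e1 : P1 = ({n+1} : Finset ℕ)
      · rw [hval P1 P2 h1 h2 h12 e1,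
            hzero P3 P4 h3 h4 h34 (by rw [← e1]; exact h13) (by rw [← e1]; exact h14),
            hval P1 P3 h1 h3 h13 e1,
            hzero P2 P4 h2 h4 h24 (by rw [← e1]; exact h12) (by rw [← e1]; exact h14)]
        have hz : bvec (SPf d n) (S.erase P1) + 0 - bvec (SPf d n) (S.erase P1) - 0 = 0 := by
          ring
        rw [hz]
        exact Submodule.zero_mem _
      by_cases e2 : P2 = ({n+1} : Finset ℕ)
      · rw [S3aux.mrg_comm S P1 P2, hval P2 P1 h2 h1 (Ne.symm h12) e2,
            hzero P3 P4 h3 h4 h34 (by rw [← e2]; exact h23) (by rw [← e2]; exact h24),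
            hzero P1 P3 h1 h3 h13 (by rw [← e2]; exact Ne.symm h12) (by rw [← e2]; exact h23),
            hval P2 P4 h2 h4 h24 e2]
        have hz : bvec (SPf d n) (S.erase P2) + 0 - 0 - bvec (SPf d n) (S.erase P2) = 0 := by
          ring
        rw [hz]
        exact Submodule.zero_mem _
      by_cases e3 : P3 = ({n+1} : Finset ℕ)
      · rw [hzero P1 P2 h1 h2 h12 (by rw [← e3]; exact Ne.symm h13) (by rw [← e3]; exact Ne.symm h23),
            hval P3 P4 h3 h4 h34 e3,
            S3aux.mrg_comm S P1 P3, hval P3 P1 h3 h1 (Ne.symm h13) e3,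
            hzero P2 P4 h2 h4 h24 (by rw [← e3]; exact Ne.symm h23) (by rw [← e3]; exact h34)]
        have hz : 0 + bvec (SPf d n) (S.erase P3) - bvec (SPf d n) (S.erase P3) - 0 = 0 := by
          ring
        rw [hz]
        exact Submodule.zero_mem _
      by_cases e4 : P4 = ({n+1} : Finset ℕ)
      · rw [hzero P1 P2 h1 h2 h12 (by rw [← e4]; exact Ne.symm h14) (by rw [← e4]; exact Ne.symm h24),
            S3aux.mrg_comm S P3 P4, hval P4 P3 h4 h3 (Ne.symm h34) e4,
            hzero P1 P3 h1 h3 h13 (by rw [← e4]; exact Ne.symm h14) (by rw [← e4]; exact Ne.symm h34),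
            S3aux.mrg_comm S P2 P4, hval P4 P2 h4 h2 (Ne.symm h24) e4]
        have hz : 0 + bvec (SPf d n) (S.erase P4) - 0 - bvec (SPf d n) (S.erase P4) = 0 := by
          ring
        rw [hz]
        exact Submodule.zero_mem _
      · rw [hzero P1 P2 h1 h2 h12 (fun h => e1 h.symm) (fun h => e2 h.symm),
            hzero P3 P4 h3 h4 h34 (fun h => e3 h.symm) (fun h => e4 h.symm),
            hzero P1 P3 h1 h3 h13 (fun h => e1 h.symm) (fun h => e3 h.symm),
            hzero P2 P4 h2 h4 h24 (fun h => e2 h.symm) (fun h => e4 h.symm)]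
        have hz : (0 : ↥(SPf d n) → ℚ) + 0 - 0 - 0 = 0 := by ring
        rw [hz]
        exact Submodule.zero_mem _
    · apply Submodule.subset_span
      have hinj := S3aux.injOn_erase hS hsing
      have hcard' : ((S.image (fun P => P.erase (n+1))).card : ℤ) = d + 4 := by
        rw [Finset.card_image_of_injOn hinj]; exact hcard
      have hnei : ∀ X Y : Finset ℕ, X ∈ S → Y ∈ S → X ≠ Y →
          X.erase (n+1) ≠ Y.erase (n+1) := by
        intro X Y hX hY hXY h
        exact hXY (hinj (Finset.mem_coe.mpr hX) (Finset.mem_coe.mpr hY) h)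
      refine ⟨S.image (fun P => P.erase (n+1)), P1.erase (n+1), P2.erase (n+1),
        P3.erase (n+1), P4.erase (n+1), S3aux.image_isPartition hS hsing, hcard',
        Finset.mem_image_of_mem _ h1, Finset.mem_image_of_mem _ h2,
        Finset.mem_image_of_mem _ h3, Finset.mem_image_of_mem _ h4,
        hnei _ _ h1 h2 h12, hnei _ _ h1 h3 h13, hnei _ _ h1 h4 h14,
        hnei _ _ h2 h3 h23, hnei _ _ h2 h4 h24, hnei _ _ h3 h4 h34, ?_⟩
      rw [S3aux.piDown_bvec (S3aux.merge_mem_SPf hS hcard h1 h2 h12)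
            (S3aux.sing_notMem_merge hS hsing h1),
          S3aux.piDown_bvec (S3aux.merge_mem_SPf hS hcard h3 h4 h34)
            (S3aux.sing_notMem_merge hS hsing h3),
          S3aux.piDown_bvec (S3aux.merge_mem_SPf hS hcard h1 h3 h13)
            (S3aux.sing_notMem_merge hS hsing h1),
          S3aux.piDown_bvec (S3aux.merge_mem_SPf hS hcard h2 h4 h24)
            (S3aux.sing_notMem_merge hS hsing h2),
          S3aux.image_merge hS hsing h1 h2 h12, S3aux.image_merge hS hsing h3 h4 h34,
          S3aux.image_merge hS hsing h1 h3 h13, S3aux.image_merge hS hsing h2 h4 h24]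
  exact ⟨hup, hdown,
    ⟨Submodule.mapQ _ _ (piUp d n) (Submodule.map_le_iff_le_comap.mp hup),
      fun x => Submodule.mapQ_apply _ _ _ x⟩,
    ⟨Submodule.mapQ _ _ (piDown d n) (Submodule.map_le_iff_le_comap.mp hdown),
      fun x => Submodule.mapQ_apply _ _ _ x⟩⟩
end

section
/- Let n ≥ 4 and 1 ≤ d ≤ n−3. Then π̃_* ∘ π̃* = 0, and if x ∈ ℚSP_{d+1,n+1} satisfies π̃_*(x) ∈ R_{d+1,n}, then x ∈ π̃*(ℚSP_{d,n}) + R_{d+1,n+1}. Equivalently, the induced sequence of quotient spaces ℚSP_{d,n}/R_{d,n} →^{π^*} ℚSP_{d+1,n+1}/R_{d+1,n+1} →^{π_*} ℚSP_{d+1,n}/R_{d+1,n} is exact at the middle term. -/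
/-! Adding `n+1` to the part containing `1` defines a section `σ` of `π̃_*`, and `σ` maps
`R_{d+1,n}` into `R_{d+1,n+1}`: merging two parts commutes with this operation, up to
adding `n+1` to the merged part when it contains `1`. So if `π̃_*(x) ∈ R`, then `x` is
congruent to `x - σ π̃_*(x)` modulo `R`, and it suffices that `Π - σ π̃_*(Π) ∈ im π̃^* + R`
for every partition `Π`. If `{n+1}` is a part of `Π`, then `Π ∈ im π̃^*`. Otherwise
`Π - σ π̃_*(Π)` is the difference of the partitions obtained by adding `n+1` to two parts
`P`, `Q` of one partition `C` of `[n]`; the relation for the parts `{n+1}, P, Q, R` of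
`C ∪ {{n+1}}`, with `R` a third part of `C`, rewrites this difference as a relation plus
two elements of `im π̃^*`. -/

open Finset

def mergeParts (S : Finset (Finset ℕ)) (A B : Finset ℕ) : Finset (Finset ℕ) :=
  insert (A ∪ B) ((S.erase A).erase B)

def addToPart (m : ℕ) (S : Finset (Finset ℕ)) (Q : Finset ℕ) : Finset (Finset ℕ) :=
  insert (insert m Q) (S.erase Q)

def liftPart (m : ℕ) (Q P : Finset ℕ) : Finset ℕ := if P = Q then insert m P else P

def partOf (S : Finset (Finset ℕ)) (a : ℕ) : Finset ℕ := (S.filter (a ∈ ·)).sup id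

section Partitions

variable {n : ℕ} {S : Finset (Finset ℕ)} {A B P Q : Finset ℕ}

lemma liftPart_mem_addToPart (hP : P ∈ S) (m : ℕ) : liftPart m Q P ∈ addToPart m S Q := by
  unfold liftPart addToPart
  split_ifs with hPQ
  · exact hPQ ▸ mem_insert_self _ _
  · exact mem_insert_of_mem (mem_erase.2 ⟨hPQ, hP⟩)

namespace IsPartition

lemma mk' (hne : ∀ P ∈ S, P.Nonempty)
    (heq : ∀ P ∈ S, ∀ Q ∈ S, ∀ a ∈ P, a ∈ Q → P = Q)
    (hcover : ∀ a, (∃ P ∈ S, a ∈ P) ↔ a ∈ Icc 1 n) : IsPartition n S :=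
  ⟨hne, fun P hP Q hQ hPQ => eq_empty_of_forall_notMem fun a ha =>
      hPQ (heq P hP Q hQ a (mem_inter.1 ha).1 (mem_inter.1 ha).2),
    by ext a; simpa using hcover a⟩

lemma exists_mem_iff (h : IsPartition n S) (a : ℕ) : (∃ P ∈ S, a ∈ P) ↔ a ∈ Icc 1 n := by
  rw [← h.2.2]; simp

lemma eq_of_mem (h : IsPartition n S) (hP : P ∈ S) (hQ : Q ∈ S) {a : ℕ}
    (haP : a ∈ P) (haQ : a ∈ Q) : P = Q := by
  by_contra hPQ
  simpa [h.2.1 P hP Q hQ hPQ] using mem_inter.2 ⟨haP, haQ⟩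

lemma subset_Icc (h : IsPartition n S) (hP : P ∈ S) : P ⊆ Icc 1 n :=
  fun a ha => (h.exists_mem_iff a).1 ⟨P, hP, ha⟩

lemma succ_notMem (h : IsPartition n S) (hP : P ∈ S) : n + 1 ∉ P :=
  fun ha => by simpa using h.subset_Icc hP ha

lemma merge (h : IsPartition n S) (hA : A ∈ S) (hB : B ∈ S) :
    IsPartition n (mergeParts S A B) := by
  refine mk' ?_ ?_ ?_
  · simp only [mergeParts, mem_insert, mem_erase]
    rintro P (rfl | ⟨-, -, hP⟩)
    · exact (h.1 A hA).mono subset_union_left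
    · exact h.1 P hP
  · simp only [mergeParts, mem_insert, mem_erase]
    grind [h.eq_of_mem]
  · intro a
    rw [← h.exists_mem_iff]
    simp only [mergeParts, mem_insert, mem_erase]
    grind

lemma addSucc (h : IsPartition n S) (hQ : Q ∈ S) :
    IsPartition (n + 1) (addToPart (n + 1) S Q) := by
  refine mk' ?_ ?_ ?_
  · simp only [addToPart, mem_insert, mem_erase]
    rintro P (rfl | ⟨-, hP⟩)
    · exact insert_nonempty _ _
    · exact h.1 P hP
  · simp only [addToPart, mem_insert, mem_erase]
    grind [h.eq_of_mem, h.succ_notMem]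
  · intro a
    have := h.exists_mem_iff a
    simp only [addToPart, mem_insert, mem_erase, mem_Icc] at this ⊢
    grind

lemma insert_singleton (h : IsPartition n S) : IsPartition (n + 1) (insert {n + 1} S) := by
  refine mk' ?_ ?_ ?_
  · simp only [mem_insert]
    rintro P (rfl | hP)
    · exact singleton_nonempty _
    · exact h.1 P hP
  · simp only [mem_insert]
    grind [h.eq_of_mem, h.succ_notMem]
  · intro a
    have := h.exists_mem_iff a
    simp only [mem_insert, mem_Icc] at this ⊢
    grind

lemma erase_singleton (h : IsPartition (n + 1) S) (hs : {n + 1} ∈ S) :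
    IsPartition n (S.erase {n + 1}) := by
  refine mk' ?_ ?_ ?_
  · exact fun P hP => h.1 P (mem_of_mem_erase hP)
  · exact fun P hP Q hQ a => h.eq_of_mem (mem_of_mem_erase hP) (mem_of_mem_erase hQ)
  · intro a
    have := h.exists_mem_iff a
    have : ∀ P ∈ S, n + 1 ∈ P → P = {n + 1} :=
      fun P hP hnP => h.eq_of_mem hP hs hnP (mem_singleton_self _)
    simp only [mem_erase, mem_Icc] at this ⊢
    grind [h.exists_mem_iff]

lemma card_mergeParts (h : IsPartition n S) (hA : A ∈ S) (hB : B ∈ S) (hAB : A ≠ B) :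
    (mergeParts S A B).card + 1 = S.card := by
  have hnot : A ∪ B ∉ (S.erase A).erase B := by
    simp only [mem_erase, not_and]
    intro _ hne hmem
    obtain ⟨a, ha⟩ := h.1 A hA
    exact hne (h.eq_of_mem hmem hA (mem_union_left _ ha) ha)
  rw [mergeParts, card_insert_of_notMem hnot, card_erase_of_mem (mem_erase.2 ⟨hAB.symm, hB⟩),
    card_erase_of_mem hA]
  have := one_lt_card.2 ⟨A, hA, B, hB, hAB⟩
  omega

lemma card_addToPart (h : IsPartition n S) (hQ : Q ∈ S) :
    (addToPart (n + 1) S Q).card = S.card := by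
  have hnot : insert (n + 1) Q ∉ S.erase Q :=
    fun hmem => h.succ_notMem (mem_of_mem_erase hmem) (mem_insert_self _ _)
  rw [addToPart, card_insert_of_notMem hnot, card_erase_of_mem hQ]
  have := card_pos.2 ⟨Q, hQ⟩
  omega

lemma exists_eq_addToPart (h : IsPartition (n + 1) S) (hs : {n + 1} ∉ S) :
    ∃ C Q, IsPartition n C ∧ Q ∈ C ∧ S = addToPart (n + 1) C Q := by
  obtain ⟨P, hP, hnP⟩ := (h.exists_mem_iff (n + 1)).2 (by simp)
  have hQ : (P.erase (n + 1)).Nonempty := by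
    rw [nonempty_iff_ne_empty]
    intro he
    apply hs
    rwa [← insert_erase hnP, he] at hP
  refine ⟨insert (P.erase (n + 1)) (S.erase P), P.erase (n + 1), ?_, mem_insert_self _ _, ?_⟩
  · refine mk' ?_ ?_ ?_
    · simp only [mem_insert, mem_erase]
      rintro Q (rfl | ⟨-, hQ⟩)
      · exact hQ
      · exact h.1 Q hQ
    · simp only [mem_insert, mem_erase]
      grind [h.eq_of_mem]
    · intro a
      have := h.exists_mem_iff a
      simp only [mem_insert, mem_erase, mem_Icc] at this ⊢
      grind [h.eq_of_mem]
  · have hnot : P.erase (n + 1) ∉ S.erase P := by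
      rintro hmem
      obtain ⟨a, ha⟩ := hQ
      exact ne_of_mem_erase hmem (h.eq_of_mem (mem_of_mem_erase hmem) hP ha (mem_of_mem_erase ha))
    rw [addToPart, erase_insert hnot, insert_erase hnP, insert_erase hP]

lemma singleton_notMem_addToPart (h : IsPartition n S) (hQ : Q ∈ S) :
    {n + 1} ∉ addToPart (n + 1) S Q := by
  simp only [addToPart, mem_insert, mem_erase, not_or, not_and]
  refine ⟨fun hsing => ?_, fun _ hs => h.succ_notMem hs (mem_singleton_self _)⟩
  obtain ⟨a, ha⟩ := h.1 Q hQ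
  have ha' : a ∈ ({n + 1} : Finset ℕ) := hsing ▸ mem_insert_of_mem ha
  exact h.succ_notMem hQ (mem_singleton.1 ha' ▸ ha)

lemma partOf_eq (h : IsPartition n S) (hQ : Q ∈ S) {a : ℕ} (ha : a ∈ Q) : partOf S a = Q := by
  have : S.filter (a ∈ ·) = {Q} := by
    ext P
    simp only [mem_filter, mem_singleton]
    exact ⟨fun ⟨hP, haP⟩ => h.eq_of_mem hP hQ haP ha, by rintro rfl; exact ⟨hQ, ha⟩⟩
  rw [partOf, this, sup_singleton, id]

lemma image_erase_addToPart (h : IsPartition n S) (hQ : Q ∈ S) :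
    (addToPart (n + 1) S Q).image (fun P => P.erase (n + 1)) = S := by
  ext P
  simp only [addToPart, image_insert, erase_insert_eq_erase, mem_insert, mem_image, mem_erase]
  grind [erase_eq_of_notMem, h.succ_notMem]

lemma addToPart_mergeParts (h : IsPartition n S) (hA : A ∈ S) (hB : B ∈ S) (hQ : Q ∈ S)
    (hAB : A ≠ B) :
    addToPart (n + 1) (mergeParts S A B) (if Q = A ∨ Q = B then A ∪ B else Q) =
      mergeParts (addToPart (n + 1) S Q) (liftPart (n + 1) Q A) (liftPart (n + 1) Q B) := by
  have := @h.succ_notMem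
  have := @h.eq_of_mem
  have := h.1
  ext P
  simp only [addToPart, mergeParts, liftPart, mem_insert, mem_erase]
  grind

lemma partOf_mergeParts (h : IsPartition n S) (hA : A ∈ S) (hB : B ∈ S) (hQ : Q ∈ S)
    {a : ℕ} (ha : a ∈ Q) :
    partOf (mergeParts S A B) a = if Q = A ∨ Q = B then A ∪ B else Q := by
  apply (h.merge hA hB).partOf_eq
  · split_ifs with hQAB
    · exact mem_insert_self _ _
    · obtain ⟨hQA, hQB⟩ := not_or.1 hQAB
      exact mem_insert_of_mem (mem_erase.2 ⟨hQB, mem_erase.2 ⟨hQA, hQ⟩⟩)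
  · split_ifs with hQAB
    · rcases hQAB with rfl | rfl
      exacts [mem_union_left _ ha, mem_union_right _ ha]
    · exact ha

lemma liftPart_injOn (h : IsPartition n S) : (S : Set (Finset ℕ)).InjOn (liftPart (n + 1) Q) := by
  intro A hA B hB hAB
  have := h.succ_notMem hA
  have := h.succ_notMem hB
  unfold liftPart at hAB
  grind

lemma mergeParts_insert_singleton (h : IsPartition n S) (P : Finset ℕ) :
    mergeParts (insert {n + 1} S) ({n + 1} : Finset ℕ) P = addToPart (n + 1) S P := by
  have := @h.succ_notMem
  ext R
  simp only [addToPart, mergeParts, mem_insert, mem_erase]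
  grind

lemma mergeParts_insert (h : IsPartition n S) (hA : A ∈ S) (hB : B ∈ S) :
    mergeParts (insert {n + 1} S) A B = insert {n + 1} (mergeParts S A B) := by
  have := h.succ_notMem hA
  have := h.succ_notMem hB
  ext R
  simp only [mergeParts, mem_insert, mem_erase]
  grind

end IsPartition

end Partitions

section FreeVectorSpace

variable {α β : Type*} [DecidableEq α] {S : Finset α} {S' : Finset β}

noncomputable def freeMap [DecidableEq β] (S : Finset α) (S' : Finset β) (f : α → β) :
    (↥S → ℚ) →ₗ[ℚ] (↥S' → ℚ) :=
  Matrix.mulVecLin (Matrix.of fun b a => if b.val = f a.val then (1 : ℚ) else 0)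

lemma mulVecLin_of_bvec (M : ↥S' → ↥S → ℚ) {a : α} (ha : a ∈ S) :
    Matrix.mulVecLin (Matrix.of M) (bvec S a) = fun b => M b ⟨a, ha⟩ := by
  funext b
  have : ∀ x : ↥S, x.val = a ↔ x = ⟨a, ha⟩ := fun x => by rw [Subtype.ext_iff]
  simp [Matrix.mulVec, dotProduct, bvec, this]

lemma freeMap_bvec [DecidableEq β] (f : α → β) {a : α} (ha : a ∈ S) :
    freeMap S S' f (bvec S a) = bvec S' (f a) :=
  mulVecLin_of_bvec _ ha

lemma map_mem_of_forall_bvec_mem {M : Type*} [AddCommGroup M] [Module ℚ M]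
    (g : (↥S → ℚ) →ₗ[ℚ] M) {p : Submodule ℚ M} (h : ∀ a ∈ S, g (bvec S a) ∈ p)
    (x : ↥S → ℚ) : g x ∈ p := by
  have hbasis : ∀ i : ↥S, (fun j => if i = j then (1 : ℚ) else 0) = bvec S i.val := by
    intro i; funext j; simp only [bvec, Subtype.ext_iff, eq_comm]
  rw [pi_eq_sum_univ x, map_sum]
  refine Submodule.sum_mem _ fun i _ => ?_
  rw [hbasis, map_smul]
  exact Submodule.smul_mem _ _ (h i.val i.property)

end FreeVectorSpace

lemma mem_SPf_s7 {d : ℤ} {n : ℕ} {S : Finset (Finset ℕ)} :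
    S ∈ SPf d n ↔ IsPartition n S ∧ (S.card : ℤ) = d + 3 := by
  simp only [SPf, mem_filter, mem_powerset, and_iff_right_iff_imp]
  exact fun h _ hP => mem_powerset.2 (h.1.subset_Icc hP)

lemma piUp_bvec {d : ℤ} {n : ℕ} {S : Finset (Finset ℕ)} (hS : S ∈ SPf d n) :
    piUp d n (bvec _ S) = bvec _ (insert {n + 1} S) :=
  freeMap_bvec _ hS

lemma piDown_bvec_of_singleton_mem {d : ℤ} {n : ℕ} {S : Finset (Finset ℕ)}
    (hS : S ∈ SPf d (n + 1)) (hs : {n + 1} ∈ S) : piDown d n (bvec _ S) = 0 := by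
  rw [piDown, mulVecLin_of_bvec _ hS]
  funext C
  simp [hs]

lemma piDown_bvec_addToPart {d : ℤ} {n : ℕ} {C : Finset (Finset ℕ)} {Q : Finset ℕ}
    (hC : IsPartition n C) (hQ : Q ∈ C) (hS : addToPart (n + 1) C Q ∈ SPf d (n + 1)) :
    piDown d n (bvec _ (addToPart (n + 1) C Q)) = bvec _ C := by
  rw [piDown, mulVecLin_of_bvec _ hS]
  funext B
  simp only [bvec, hC.singleton_notMem_addToPart hQ, not_false_iff, true_and,
    hC.image_erase_addToPart hQ]

noncomputable def relVec (d : ℤ) (n : ℕ) (S : Finset (Finset ℕ)) (P₁ P₂ P₃ P₄ : Finset ℕ) :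
    ↥(SPf d n) → ℚ :=
  bvec _ (mergeParts S P₁ P₂) + bvec _ (mergeParts S P₃ P₄)
    - bvec _ (mergeParts S P₁ P₃) - bvec _ (mergeParts S P₂ P₄)

section Relations

variable {d : ℤ} {n : ℕ} {S : Finset (Finset ℕ)} {A B P₁ P₂ P₃ P₄ : Finset ℕ}

lemma relVec_mem_Rsub (hS : IsPartition n S) (hcard : (S.card : ℤ) = d + 4)
    (h₁ : P₁ ∈ S) (h₂ : P₂ ∈ S) (h₃ : P₃ ∈ S) (h₄ : P₄ ∈ S) (h₁₂ : P₁ ≠ P₂) (h₁₃ : P₁ ≠ P₃)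
    (h₁₄ : P₁ ≠ P₄) (h₂₃ : P₂ ≠ P₃) (h₂₄ : P₂ ≠ P₄) (h₃₄ : P₃ ≠ P₄) :
    relVec d n S P₁ P₂ P₃ P₄ ∈ Rsub d n :=
  Submodule.subset_span
    ⟨S, P₁, P₂, P₃, P₄, hS, hcard, h₁, h₂, h₃, h₄, h₁₂, h₁₃, h₁₄, h₂₃, h₂₄, h₃₄, rfl⟩

lemma mergeParts_mem_SPf (hS : IsPartition n S) (hcard : (S.card : ℤ) = d + 4)
    (hA : A ∈ S) (hB : B ∈ S) (hAB : A ≠ B) : mergeParts S A B ∈ SPf d n :=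
  mem_SPf_s7.2 ⟨hS.merge hA hB, by have := hS.card_mergeParts hA hB hAB; omega⟩

end Relations

noncomputable def piDownSection (d : ℤ) (n : ℕ) :
    (↥(SPf d n) → ℚ) →ₗ[ℚ] (↥(SPf d (n + 1)) → ℚ) :=
  freeMap (SPf d n) (SPf d (n + 1)) fun C => addToPart (n + 1) C (partOf C 1)

section PiDownSection

variable {d : ℤ} {n : ℕ} {S : Finset (Finset ℕ)} {P₁ P₂ P₃ P₄ : Finset ℕ}

lemma piDownSection_bvec {C : Finset (Finset ℕ)} (hC : C ∈ SPf d n) :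
    piDownSection d n (bvec _ C) = bvec _ (addToPart (n + 1) C (partOf C 1)) :=
  freeMap_bvec _ hC

lemma piDownSection_relVec (hn : 1 ≤ n) (hS : IsPartition n S) (hcard : (S.card : ℤ) = d + 4)
    (h₁ : P₁ ∈ S) (h₂ : P₂ ∈ S) (h₃ : P₃ ∈ S) (h₄ : P₄ ∈ S) (h₁₂ : P₁ ≠ P₂) (h₁₃ : P₁ ≠ P₃)
    (h₁₄ : P₁ ≠ P₄) (h₂₃ : P₂ ≠ P₃) (h₂₄ : P₂ ≠ P₄) (h₃₄ : P₃ ≠ P₄) :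
    piDownSection d n (relVec d n S P₁ P₂ P₃ P₄) ∈ Rsub d (n + 1) := by
  obtain ⟨Q, hQ, h1Q⟩ := (hS.exists_mem_iff 1).2 (mem_Icc.2 ⟨le_rfl, hn⟩)
  set lift := liftPart (n + 1) Q
  have hmerge : ∀ {A B}, A ∈ S → B ∈ S → A ≠ B →
      piDownSection d n (bvec _ (mergeParts S A B)) =
        bvec _ (mergeParts (addToPart (n + 1) S Q) (lift A) (lift B)) := by
    intro A B hA hB hAB
    rw [piDownSection_bvec (mergeParts_mem_SPf hS hcard hA hB hAB),
      hS.partOf_mergeParts hA hB hQ h1Q, hS.addToPart_mergeParts hA hB hQ hAB]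
  have hlift : ∀ {A B}, A ∈ S → B ∈ S → A ≠ B → lift A ≠ lift B :=
    fun hA hB hAB h => hAB (hS.liftPart_injOn hA hB h)
  rw [relVec, map_sub, map_sub, map_add, hmerge h₁ h₂ h₁₂, hmerge h₃ h₄ h₃₄, hmerge h₁ h₃ h₁₃,
    hmerge h₂ h₄ h₂₄]
  exact relVec_mem_Rsub (hS.addSucc hQ) (by rw [hS.card_addToPart hQ, hcard])
    (liftPart_mem_addToPart h₁ _) (liftPart_mem_addToPart h₂ _) (liftPart_mem_addToPart h₃ _)
    (liftPart_mem_addToPart h₄ _) (hlift h₁ h₂ h₁₂) (hlift h₁ h₃ h₁₃) (hlift h₁ h₄ h₁₄)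
    (hlift h₂ h₃ h₂₃) (hlift h₂ h₄ h₂₄) (hlift h₃ h₄ h₃₄)

lemma Rsub_le_comap_piDownSection (hn : 1 ≤ n) :
    Rsub d n ≤ (Rsub d (n + 1)).comap (piDownSection d n) := by
  refine Submodule.span_le.2 ?_
  rintro _ ⟨S, P₁, P₂, P₃, P₄, hS, hcard, h₁, h₂, h₃, h₄, h₁₂, h₁₃, h₁₄, h₂₃, h₂₄, h₃₄, rfl⟩
  rw [SetLike.mem_coe, Submodule.mem_comap]
  exact piDownSection_relVec hn hS hcard h₁ h₂ h₃ h₄ h₁₂ h₁₃ h₁₄ h₂₃ h₂₄ h₃₄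

end PiDownSection

section Exactness

variable {d : ℤ} {n : ℕ}

lemma insert_singleton_mem_SPf {C : Finset (Finset ℕ)} (hC : C ∈ SPf d n) :
    insert {n + 1} C ∈ SPf (d + 1) (n + 1) := by
  obtain ⟨hC, hcard⟩ := mem_SPf_s7.1 hC
  refine mem_SPf_s7.2 ⟨hC.insert_singleton, ?_⟩
  rw [card_insert_of_notMem fun hs => hC.succ_notMem hs (mem_singleton_self _)]
  push_cast
  omega

lemma piDown_comp_piUp : (piDown (d + 1) n).comp (piUp d n) = 0 := by
  refine LinearMap.ext fun x => ?_
  have := map_mem_of_forall_bvec_mem ((piDown (d + 1) n).comp (piUp d n)) (p := ⊥) (x := x)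
    fun C hC => by
      rw [LinearMap.comp_apply, piUp_bvec hC,
        piDown_bvec_of_singleton_mem (insert_singleton_mem_SPf hC) (mem_insert_self _ _)]
      exact zero_mem _
  simpa using this

lemma bvec_addToPart_sub_mem (hd : -1 ≤ d) {C : Finset (Finset ℕ)} {P Q : Finset ℕ}
    (hC : IsPartition n C) (hcard : (C.card : ℤ) = d + 4) (hP : P ∈ C) (hQ : Q ∈ C) :
    bvec (SPf (d + 1) (n + 1)) (addToPart (n + 1) C P) - bvec _ (addToPart (n + 1) C Q) ∈
      LinearMap.range (piUp d n) ⊔ Rsub (d + 1) (n + 1) := by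
  rcases eq_or_ne P Q with rfl | hPQ
  · simp
  obtain ⟨R, hR, hRP, hRQ⟩ : ∃ R ∈ C, R ≠ P ∧ R ≠ Q := by
    by_contra! hall
    have := card_le_card (show C ⊆ {P, Q} by
      intro R hR
      rw [mem_insert, mem_singleton, or_iff_not_imp_left]
      exact hall R hR)
    have := card_le_two (a := P) (b := Q)
    omega
  have hsing : ∀ {A}, A ∈ C → ({n + 1} : Finset ℕ) ≠ A :=
    fun hA hs => hC.succ_notMem hA (hs ▸ mem_singleton_self _)
  have hrel := relVec_mem_Rsub (d := d + 1) hC.insert_singleton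
    (by rw [card_insert_of_notMem fun hs => hsing hs rfl]; push_cast; omega)
    (mem_insert_self _ _) (mem_insert_of_mem hP) (mem_insert_of_mem hQ) (mem_insert_of_mem hR)
    (hsing hP) (hsing hQ) (hsing hR) hPQ hRP.symm hRQ.symm
  rw [relVec, hC.mergeParts_insert_singleton, hC.mergeParts_insert_singleton,
    hC.mergeParts_insert hQ hR, hC.mergeParts_insert hP hR,
    ← piUp_bvec (mergeParts_mem_SPf hC hcard hQ hR hRQ.symm),
    ← piUp_bvec (mergeParts_mem_SPf hC hcard hP hR hRP.symm)] at hrel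
  convert add_mem (sub_mem (Submodule.mem_sup_right hrel)
    (Submodule.mem_sup_left (LinearMap.mem_range_self _ (bvec _ (mergeParts C Q R)))))
    (Submodule.mem_sup_left (LinearMap.mem_range_self _ (bvec _ (mergeParts C P R)))) using 1
  abel

lemma bvec_sub_piDownSection_piDown_mem (hn : 1 ≤ n) (hd : -1 ≤ d) {B : Finset (Finset ℕ)}
    (hB : B ∈ SPf (d + 1) (n + 1)) :
    bvec _ B - piDownSection (d + 1) n (piDown (d + 1) n (bvec _ B)) ∈
      LinearMap.range (piUp d n) ⊔ Rsub (d + 1) (n + 1) := by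
  obtain ⟨hBpart, hBcard⟩ := mem_SPf_s7.1 hB
  by_cases hs : {n + 1} ∈ B
  · rw [piDown_bvec_of_singleton_mem hB hs, map_zero, sub_zero]
    have hC : B.erase {n + 1} ∈ SPf d n := by
      refine mem_SPf_s7.2 ⟨hBpart.erase_singleton hs, ?_⟩
      rw [card_erase_of_mem hs, Nat.cast_sub (card_pos.2 ⟨_, hs⟩)]
      omega
    refine Submodule.mem_sup_left ⟨bvec _ (B.erase {n + 1}), ?_⟩
    rw [piUp_bvec hC, insert_erase hs]
  · obtain ⟨C, P, hC, hP, rfl⟩ := hBpart.exists_eq_addToPart hs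
    have hCcard : (C.card : ℤ) = d + 4 := by rw [← hC.card_addToPart hP]; omega
    obtain ⟨Q, hQ, h1Q⟩ := (hC.exists_mem_iff 1).2 (mem_Icc.2 ⟨le_rfl, hn⟩)
    rw [piDown_bvec_addToPart hC hP hB, piDownSection_bvec (mem_SPf_s7.2 ⟨hC, by omega⟩),
      hC.partOf_eq hQ h1Q]
    exact bvec_addToPart_sub_mem hd hC hCcard hP hQ

end Exactness

theorem statement7_general (n : ℕ) (d : ℤ) (hn : 4 ≤ n) (hd1 : 1 ≤ d) :
    (piDown (d+1) n).comp (piUp d n) = 0 ∧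
    ∀ x : ↥(SPf (d+1) (n+1)) → ℚ, piDown (d+1) n x ∈ Rsub (d+1) n →
      x ∈ LinearMap.range (piUp d n) ⊔ Rsub (d+1) (n+1) := by
  refine ⟨piDown_comp_piUp, fun x hx => ?_⟩
  have hsec : piDownSection (d + 1) n (piDown (d + 1) n x) ∈ Rsub (d + 1) (n + 1) :=
    Rsub_le_comap_piDownSection (by omega) hx
  have hdiff := map_mem_of_forall_bvec_mem
    (LinearMap.id - (piDownSection (d + 1) n).comp (piDown (d + 1) n))
    (fun B hB => bvec_sub_piDownSection_piDown_mem (by omega) (by omega) hB) x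
  simpa using add_mem hdiff (Submodule.mem_sup_right hsec)

/-- For `n ≥ 4` and `1 ≤ d ≤ n−3`: `π̃_* ∘ π̃^* = 0`, and any
`x ∈ ℚSP_{d+1,n+1}` with `π̃_*(x) ∈ R_{d+1,n}` lies in `im(π̃^*) + R_{d+1,n+1}`;
i.e. the induced sequence of quotients is exact at the middle term. -/
theorem statement7 (n : ℕ) (d : ℤ) (hn : 4 ≤ n) (hd1 : 1 ≤ d) (hd2 : d ≤ (n : ℤ) - 3) :
    (piDown (d+1) n).comp (piUp d n) = 0 ∧
    ∀ x : ↥(SPf (d+1) (n+1)) → ℚ, piDown (d+1) n x ∈ Rsub (d+1) n →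
      x ∈ LinearMap.range (piUp d n) ⊔ Rsub (d+1) (n+1) :=
  statement7_general n d hn hd1
end

section
/- For every n ≥ 1, the linear maps odd_n : ℚF_n → ℚO_n and even_n : ℚF_n → ℚE_n are both surjective. -/
/-!
Both maps are instances of `parityMap n r σ : (P₁,P₂) ↦ −Σ_{T⊆P₁} T + σ Σ_{T⊆P₂} T` on the
subsets `T ⊆ [n]` with `|T| ≡ r (mod 2)`, with `σ ≠ (-1)^r`. Since all rows have the same
parity, `T` is determined by `C = T \ {1}`. Möbius inversion over `B ⊆ C` of the columns
`(insert 1 B, [n] \ insert 1 B)` gives a vector of the range which is a nonzero multiple of the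
basis vector `T` plus a sum of basis vectors `S` with `1 ∉ S` and `C ⊂ S`; the multiple is
`σ - (-1)^r` if `T = C` and `-(-1)^|C|` otherwise. Downward induction on `C` then puts every
basis vector into the range.
-/

namespace Finset
variable {α R : Type*} [DecidableEq α] [Ring R]

theorem sum_powerset_neg_one_pow_card' (x : Finset α) :
    ∑ m ∈ x.powerset, (-1 : R) ^ #m = if x = ∅ then 1 else 0 := by
  have := congrArg (Int.cast : ℤ → R) (sum_powerset_neg_one_pow_card (x := x))
  push_cast at this
  exact this

theorem sum_powerset_filter_disjoint_neg_one_pow_card (s t : Finset α) :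
    ∑ u ∈ s.powerset with Disjoint t u, (-1 : R) ^ #u = if s ⊆ t then 1 else 0 := by
  have : {u ∈ s.powerset | Disjoint t u} = (s \ t).powerset := by
    ext u; simp [subset_sdiff, disjoint_comm]
  simp only [this, sum_powerset_neg_one_pow_card', sdiff_eq_empty_iff_subset]

theorem sum_powerset_filter_superset_neg_one_pow_card (s t : Finset α) :
    ∑ u ∈ s.powerset with t ⊆ u, (-1 : R) ^ #u = if t = s then (-1) ^ #s else 0 := by
  by_cases hts : t ⊆ s
  · have hdisj : ∀ u ∈ (s \ t).powerset, Disjoint t u := fun u hu =>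
      disjoint_of_subset_right (mem_powerset.1 hu) disjoint_sdiff
    have hfilter : {u ∈ s.powerset | t ⊆ u} = (s \ t).powerset.image (t ∪ ·) := by
      rw [← Icc_eq_image_powerset hts]; ext u; simp [and_comm]
    rw [hfilter, sum_image fun u hu v hv huv => by
      rw [← union_sdiff_cancel_left (hdisj u hu), ← union_sdiff_cancel_left (hdisj v hv)]
      exact congrArg (· \ t) huv]
    rw [sum_congr rfl fun u hu => by rw [card_union_of_disjoint (hdisj u hu), pow_add], ← mul_sum]
    simp only [sum_powerset_neg_one_pow_card', sdiff_eq_empty_iff_subset]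
    by_cases h : t = s
    · subst h; simp
    · rw [if_neg h, if_neg fun hst => h (hts.antisymm hst), mul_zero]
  · rw [if_neg (fun h => hts h.le), sum_eq_zero]
    intro u hu
    exact absurd ((mem_filter.1 hu).2.trans (mem_powerset.1 (mem_filter.1 hu).1)) hts

theorem eq_of_erase_eq_of_card_mod_two {s t : Finset α} {a : α} (h : s.erase a = t.erase a)
    (hst : #s % 2 = #t % 2) : s = t := by
  have hmem : a ∈ s ↔ a ∈ t := by
    by_contra hne
    have hs := card_erase_add_one (s := s) (a := a)
    have ht := card_erase_add_one (s := t) (a := a)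
    by_cases has : a ∈ s <;> by_cases hat : a ∈ t <;> simp_all [card_erase_of_mem] <;> omega
  ext x
  by_cases hx : x = a
  · subst hx; exact hmem
  · simpa [hx] using congrArg (x ∈ ·) h

end Finset

open Finset

def paritySets (n r : ℕ) : Finset (Finset ℕ) :=
  (Icc 1 n).powerset.filter (fun T => #T % 2 = r)

noncomputable def parityMap (n r : ℕ) (σ : ℚ) :
    (↥(Fset n) → ℚ) →ₗ[ℚ] (↥(paritySets n r) → ℚ) :=
  Matrix.mulVecLin (Matrix.of fun T p =>
    (if T.val ⊆ p.val.1 then (-1 : ℚ) else 0) + (if T.val ⊆ p.val.2 then σ else 0))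

theorem mem_paritySets {n r : ℕ} {T : Finset ℕ} :
    T ∈ paritySets n r ↔ T ⊆ Icc 1 n ∧ #T % 2 = r := by
  simp [paritySets]

theorem insert_one_sdiff_mem_Fset {n : ℕ} (hn : 1 ≤ n) {B : Finset ℕ} (hB : B ⊆ Icc 1 n) :
    (insert 1 B, Icc 1 n \ insert 1 B) ∈ Fset n := by
  have hins : insert 1 B ⊆ Icc 1 n := insert_subset (by simp [hn]) hB
  simp only [Fset, mem_filter, mem_product, mem_powerset]
  exact ⟨⟨hins, sdiff_subset⟩, union_sdiff_of_subset hins, inter_sdiff_self _ _,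
    mem_insert_self 1 B⟩

namespace parityMap

variable {n r : ℕ} {σ : ℚ}

theorem column_mem_range {q : Finset ℕ × Finset ℕ} (hq : q ∈ Fset n) :
    (fun T : paritySets n r =>
      (if T.val ⊆ q.1 then (-1 : ℚ) else 0) + (if T.val ⊆ q.2 then σ else 0))
      ∈ LinearMap.range (parityMap n r σ) :=
  ⟨Pi.single ⟨q, hq⟩ 1, by ext T; simp [parityMap]⟩

variable (n r σ) in
/-- The image of `∑_{B ⊆ C} (-1)^|B| • (insert 1 B, [n] \ insert 1 B)`. -/
def moebiusVector (C : Finset ℕ) : paritySets n r → ℚ := fun T =>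
  (if T.val.erase 1 = C then -(-1) ^ #C else 0) + (if 1 ∉ T.val ∧ C ⊆ T.val then σ else 0)

theorem moebiusVector_mem_range (hn : 1 ≤ n) {C : Finset ℕ} (hC : C ⊆ Icc 1 n) :
    moebiusVector n r σ C ∈ LinearMap.range (parityMap n r σ) := by
  have hcol : ∀ B ∈ C.powerset, (fun T : paritySets n r =>
      (if T.val ⊆ insert 1 B then (-1 : ℚ) else 0)
        + (if T.val ⊆ Icc 1 n \ insert 1 B then σ else 0)) ∈ LinearMap.range (parityMap n r σ) :=
    fun B hB => column_mem_range (insert_one_sdiff_mem_Fset hn ((mem_powerset.1 hB).trans hC))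
  convert sum_mem fun B hB => Submodule.smul_mem _ ((-1 : ℚ) ^ #B) (hcol B hB) using 1
  funext T
  have hT := (mem_paritySets.1 T.2).1
  simp only [moebiusVector, Finset.sum_apply, Pi.smul_apply, smul_eq_mul, subset_insert_iff,
    subset_sdiff, hT, disjoint_insert_right, true_and, mul_add, sum_add_distrib, mul_ite, mul_zero]
  congr 1
  · rw [← sum_filter, ← sum_mul, sum_powerset_filter_superset_neg_one_pow_card]
    split_ifs <;> simp
  · by_cases h1 : 1 ∈ T.val
    · simp [h1]
    · simp only [h1, not_false_eq_true, true_and]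
      rw [← sum_filter, ← sum_mul, sum_powerset_filter_disjoint_neg_one_pow_card]
      split_ifs <;> simp

theorem moebiusVector_erase_eq (t : paritySets n r) :
    moebiusVector n r σ (t.val.erase 1)
      = (-(-1) ^ #(t.val.erase 1) + if 1 ∈ t.val then 0 else σ) • Pi.single t 1
        + σ • ∑ s ∈ univ with 1 ∉ s.val ∧ t.val.erase 1 ⊂ s.val, Pi.single s 1 := by
  funext s
  have hiff : s.val.erase 1 = t.val.erase 1 ↔ s = t :=
    ⟨fun h => Subtype.ext (eq_of_erase_eq_of_card_mod_two h
      (by rw [(mem_paritySets.1 s.2).2, (mem_paritySets.1 t.2).2])), fun h => h ▸ rfl⟩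
  simp only [moebiusVector, Pi.add_apply, Pi.smul_apply, Finset.sum_apply, Pi.single_apply,
    sum_ite_eq, mem_filter, mem_univ, true_and, smul_eq_mul, hiff]
  by_cases hst : s = t
  · subst hst
    by_cases h1 : 1 ∈ s.val <;> simp [h1]
  · have hsub : 1 ∉ s.val ∧ t.val.erase 1 ⊆ s.val ↔ 1 ∉ s.val ∧ t.val.erase 1 ⊂ s.val :=
      ⟨fun ⟨h1, hts⟩ => ⟨h1, hts.ssubset_of_ne fun h =>
        hst (hiff.1 (by rw [erase_eq_of_notMem h1, h]))⟩, fun ⟨h1, hts⟩ => ⟨h1, hts.subset⟩⟩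
    simp [hst, hsub]

theorem single_mem_range (hn : 1 ≤ n) (hσ : σ ≠ (-1) ^ r) (t : paritySets n r) :
    Pi.single t 1 ∈ LinearMap.range (parityMap n r σ) := by
  suffices ∀ C : Finset ℕ, #C ≤ n → ∀ u : paritySets n r, u.val.erase 1 = C →
      Pi.single u 1 ∈ LinearMap.range (parityMap n r σ) from
    this _ ((card_le_card ((erase_subset 1 _).trans (mem_paritySets.1 t.2).1)).trans
      (by simp)) t rfl
  clear t
  refine strongDownwardInduction fun C ih _ t htC => ?_
  subst htC
  have hsup : (∑ s ∈ univ with 1 ∉ s.val ∧ t.val.erase 1 ⊂ s.val, Pi.single s 1)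
      ∈ LinearMap.range (parityMap n r σ) := by
    refine sum_mem fun s hs => ?_
    obtain ⟨h1s, hts⟩ := (mem_filter.1 hs).2
    exact ih ((card_le_card (mem_paritySets.1 s.2).1).trans (by simp)) hts s
      (erase_eq_of_notMem h1s)
  have hcoeff : -(-1) ^ #(t.val.erase 1) + (if 1 ∈ t.val then 0 else σ) ≠ 0 := by
    by_cases h1 : 1 ∈ t.val
    · simp [h1]
    · have hpow : (-1 : ℚ) ^ #t.val = (-1) ^ r := by
        rw [neg_one_pow_eq_pow_mod_two, (mem_paritySets.1 t.2).2]
      simpa [h1, hpow, neg_add_eq_zero] using hσ.symm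
  have hw := moebiusVector_mem_range (r := r) (σ := σ) hn
    ((erase_subset 1 _).trans (mem_paritySets.1 t.2).1)
  rw [moebiusVector_erase_eq] at hw
  exact (Submodule.smul_mem_iff _ hcoeff).1
    ((Submodule.add_mem_iff_left _ (Submodule.smul_mem _ σ hsup)).1 hw)

theorem surjective (hn : 1 ≤ n) (hσ : σ ≠ (-1) ^ r) : Function.Surjective (parityMap n r σ) := by
  rw [← LinearMap.range_eq_top, eq_top_iff, ← (Pi.basisFun ℚ _).span_eq, Submodule.span_le]
  rintro _ ⟨t, rfl⟩
  simpa using single_mem_range hn hσ t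

end parityMap

/-- For every `n ≥ 1`, `odd_n : ℚF_n → ℚO_n` and
`even_n : ℚF_n → ℚE_n` are surjective. -/
theorem statement10 (n : ℕ) (hn : 1 ≤ n) :
    Function.Surjective (oddMap n) ∧ Function.Surjective (evenMap n) :=
  ⟨parityMap.surjective (r := 1) (σ := 1) hn (by norm_num),
    parityMap.surjective (r := 0) (σ := -1) hn (by norm_num)⟩
end

section
/- For every n ≥ 1, the following identities of linear maps hold: odd_{n+1} ∘ γ = α ∘ even_n as maps ℚF_n → ℚO_{n+1}, and odd_n ∘ π̃'_* = β ∘ odd_{n+1} as maps ℚF_{n+1} → ℚO_n. -/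
lemma sum_ite_val {A : Type*} [DecidableEq A] (S : Finset A) (a : A) (ha : a ∈ S)
    (c : A → ℚ) :
    (∑ q : ↥S, (if q.val = a then c q.val else 0)) = c a := by
  have h : ∀ q : ↥S, (if q.val = a then c q.val else 0)
      = if q = ⟨a, ha⟩ then c q.val else 0 := by
    intro q
    by_cases hq : q.val = a
    · simp [hq, Subtype.ext_iff]
    · simp [hq, Subtype.ext_iff]
  simp_rw [h]
  simp

lemma mem_Fset_iff {n : ℕ} {p : Finset ℕ × Finset ℕ} :
    p ∈ Fset n ↔ p.1 ∪ p.2 = Finset.Icc 1 n ∧ p.1 ∩ p.2 = ∅ ∧ 1 ∈ p.1 := by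
  simp only [Fset, Finset.mem_filter, Finset.mem_product, Finset.mem_powerset]
  constructor
  · rintro ⟨_, h⟩; exact h
  · rintro ⟨hu, hd, h1⟩
    exact ⟨⟨hu ▸ Finset.subset_union_left, hu ▸ Finset.subset_union_right⟩, hu, hd, h1⟩

/-- For every `n ≥ 1`: `odd_{n+1} ∘ γ = α ∘ even_n` and
`odd_n ∘ π̃'_* = β ∘ odd_{n+1}`. -/
theorem statement11 (n : ℕ) (hn : 1 ≤ n) :
    (oddMap (n+1)).comp (gammaMap n) = (insMap n (Eset n) (Oset (n+1))).comp (evenMap n) ∧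
    (oddMap n).comp (piDownF n) = (resMap n (Oset (n+1)) (Oset n)).comp (oddMap (n+1)) := by
  have hIcc : Finset.Icc 1 (n+1) = insert (n+1) (Finset.Icc 1 n) := by
    ext x; simp [Finset.mem_Icc]; omega
  have hnn : (n+1) ∉ Finset.Icc 1 n := by simp
  constructor
  · unfold oddMap gammaMap insMap evenMap
    rw [← Matrix.mulVecLin_mul, ← Matrix.mulVecLin_mul]
    congr 1
    ext T p
    rw [Matrix.mul_apply, Matrix.mul_apply]
    simp only [Matrix.of_apply, mul_sub, mul_ite, mul_one, mul_zero, ite_mul, zero_mul, one_mul,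
      Finset.sum_sub_distrib]
    obtain ⟨hu, hd, h1⟩ := mem_Fset_iff.mp p.2
    have hp1 : p.val.1 ⊆ Finset.Icc 1 n := hu ▸ Finset.subset_union_left
    have hp2 : p.val.2 ⊆ Finset.Icc 1 n := hu ▸ Finset.subset_union_right
    have hn1 : (n+1) ∉ p.val.1 := fun h => hnn (hp1 h)
    have hn2 : (n+1) ∉ p.val.2 := fun h => hnn (hp2 h)
    have ha : (insert (n+1) p.val.1, p.val.2) ∈ Fset (n+1) := by
      refine mem_Fset_iff.mpr ⟨?_, ?_, Finset.mem_insert_of_mem h1⟩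
      · show insert (n+1) p.val.1 ∪ p.val.2 = _
        rw [Finset.insert_union, hu, hIcc]
      · show insert (n+1) p.val.1 ∩ p.val.2 = _
        rw [Finset.insert_inter_of_notMem hn2, hd]
    have hb : (p.val.1, insert (n+1) p.val.2) ∈ Fset (n+1) := by
      refine mem_Fset_iff.mpr ⟨?_, ?_, h1⟩
      · show p.val.1 ∪ insert (n+1) p.val.2 = _
        rw [Finset.union_insert, hu, hIcc]
      · show p.val.1 ∩ insert (n+1) p.val.2 = _
        rw [Finset.inter_insert_of_notMem hn1, hd]
    rw [sum_ite_val (Fset (n+1)) _ ha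
      (fun r => (if (T:Finset ℕ) ⊆ r.1 then (-1:ℚ) else 0) + if (T:Finset ℕ) ⊆ r.2 then 1 else 0),
      sum_ite_val (Fset (n+1)) _ hb
      (fun r => (if (T:Finset ℕ) ⊆ r.1 then (-1:ℚ) else 0) + if (T:Finset ℕ) ⊆ r.2 then 1 else 0)]
    have hT : (T:Finset ℕ) ⊆ Finset.Icc 1 (n+1) := by
      have := T.2
      simp only [Oset, Finset.mem_filter, Finset.mem_powerset] at this
      exact this.1
    have hTcard : (T:Finset ℕ).card % 2 = 1 := by
      have := T.2
      simp only [Oset, Finset.mem_filter, Finset.mem_powerset] at this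
      exact this.2
    by_cases hm : (n+1) ∈ (T:Finset ℕ)
    · -- RHS has the single term x = T.erase (n+1)
      have hnotsub1 : ¬ (T:Finset ℕ) ⊆ p.val.1 := fun h => hn1 (h hm)
      have hnotsub2 : ¬ (T:Finset ℕ) ⊆ p.val.2 := fun h => hn2 (h hm)
      have key : ∀ x : ↥(Eset n), ((T:Finset ℕ) = insert (n+1) x.val) ↔
          (x.val = (T:Finset ℕ).erase (n+1)) := by
        intro x
        have hx : (n+1) ∉ x.val := by
          have := x.2
          simp only [Eset, Finset.mem_filter, Finset.mem_powerset] at this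
          exact fun h => hnn (this.1 h)
        constructor
        · intro h; rw [h, Finset.erase_insert hx]
        · intro h; rw [h, Finset.insert_erase hm]
      rw [Finset.sum_congr rfl (fun x _ => if_congr (key x) rfl rfl)]
      have hTe : (T:Finset ℕ).erase (n+1) ∈ Eset n := by
        simp only [Eset, Finset.mem_filter, Finset.mem_powerset]
        constructor
        · intro x hx
          have hx' := Finset.mem_of_mem_erase hx
          have hxne := Finset.ne_of_mem_erase hx
          have := hT hx'
          simp only [Finset.mem_Icc] at this ⊢
          omega
        · rw [Finset.card_erase_of_mem hm]
          omega
      rw [sum_ite_val (Eset n) _ hTe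
        (fun r => (if r ⊆ p.val.1 then (-1:ℚ) else 0) + if r ⊆ p.val.2 then (-1:ℚ) else 0)]
      simp only [Finset.subset_insert_iff, if_neg hnotsub1, if_neg hnotsub2]
      split_ifs <;> norm_num
    · -- both sides vanish
      have hR : (∑ x : ↥(Eset n),
          if (T:Finset ℕ) = insert (n+1) x.val then
            ((if x.val ⊆ p.val.1 then (-1:ℚ) else 0) + if x.val ⊆ p.val.2 then (-1:ℚ) else 0)
          else 0) = 0 := by
        apply Finset.sum_eq_zero
        intro x _
        rw [if_neg]
        intro h
        exact hm (h ▸ Finset.mem_insert_self (n+1) x.val)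
      rw [hR]
      simp only [Finset.subset_insert_iff_of_notMem hm]
      ring
  · unfold oddMap piDownF resMap
    rw [← Matrix.mulVecLin_mul, ← Matrix.mulVecLin_mul]
    congr 1
    ext T p
    rw [Matrix.mul_apply, Matrix.mul_apply]
    simp only [Matrix.of_apply, mul_ite, mul_one, mul_zero, ite_mul, zero_mul, one_mul]
    obtain ⟨hu, hd, h1⟩ := mem_Fset_iff.mp p.2
    have hT : (T:Finset ℕ) ⊆ Finset.Icc 1 n := by
      have := T.2
      simp only [Oset, Finset.mem_filter, Finset.mem_powerset] at this
      exact this.1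
    have hTcard : (T:Finset ℕ).card % 2 = 1 := by
      have := T.2
      simp only [Oset, Finset.mem_filter, Finset.mem_powerset] at this
      exact this.2
    have hmT : (n+1) ∉ (T:Finset ℕ) := fun h => hnn (hT h)
    have hc : (p.val.1.erase (n+1), p.val.2.erase (n+1)) ∈ Fset n := by
      refine mem_Fset_iff.mpr ⟨?_, ?_, ?_⟩
      · show p.val.1.erase (n+1) ∪ p.val.2.erase (n+1) = _
        rw [← Finset.erase_union_distrib, hu, hIcc, Finset.erase_insert hnn]
      · show p.val.1.erase (n+1) ∩ p.val.2.erase (n+1) = _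
        have hsub : p.val.1.erase (n+1) ∩ p.val.2.erase (n+1) ⊆ p.val.1 ∩ p.val.2 :=
          Finset.inter_subset_inter (Finset.erase_subset _ _) (Finset.erase_subset _ _)
        rw [hd] at hsub
        exact Finset.subset_empty.mp hsub
      · exact Finset.mem_erase.mpr ⟨by omega, h1⟩
    rw [sum_ite_val (Fset n) _ hc
      (fun r => (if (T:Finset ℕ) ⊆ r.1 then (-1:ℚ) else 0) + if (T:Finset ℕ) ⊆ r.2 then 1 else 0)]
    have hTO : (T:Finset ℕ) ∈ Oset (n+1) := by
      simp only [Oset, Finset.mem_filter, Finset.mem_powerset]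
      exact ⟨hT.trans (Finset.Icc_subset_Icc_right (by omega)), hTcard⟩
    have key : ∀ x : ↥(Oset (n+1)), (x.val = (T:Finset ℕ) ∧ (n+1) ∉ x.val) ↔
        (x.val = (T:Finset ℕ)) := by
      intro x
      constructor
      · exact fun h => h.1
      · intro h; exact ⟨h, h ▸ hmT⟩
    rw [Finset.sum_congr rfl (fun x _ => if_congr (key x) rfl rfl)]
    rw [sum_ite_val (Oset (n+1)) _ hTO
      (fun r => (if r ⊆ p.val.1 then (-1:ℚ) else 0) + if r ⊆ p.val.2 then 1 else 0)]
    simp [Finset.subset_erase, hmT]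
end

section
/- For every n ≥ 1, the sequence ℚF_n →^γ ℚF_{n+1} →^{π̃'_*} ℚF_n → 0 is exact: π̃'_* is surjective and the kernel of π̃'_* equals the image of γ. -/
namespace S13

lemma mem_Fset {n : ℕ} {p : Finset ℕ × Finset ℕ} :
    p ∈ Fset n ↔ p.1 ∪ p.2 = Finset.Icc 1 n ∧ p.1 ∩ p.2 = ∅ ∧ 1 ∈ p.1 := by
  constructor
  · intro h
    simp only [Fset, Finset.mem_filter] at h
    exact h.2
  · rintro ⟨h1, h2, h3⟩
    simp only [Fset, Finset.mem_filter, Finset.mem_product, Finset.mem_powerset]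
    refine ⟨⟨h1 ▸ Finset.subset_union_left, h1 ▸ Finset.subset_union_right⟩, h1, h2, h3⟩

/-- erase map on pairs -/
def ep (n : ℕ) (p : Finset ℕ × Finset ℕ) : Finset ℕ × Finset ℕ :=
  (p.1.erase (n+1), p.2.erase (n+1))

def pl (n : ℕ) (r : Finset ℕ × Finset ℕ) : Finset ℕ × Finset ℕ :=
  (insert (n+1) r.1, r.2)

def mi (n : ℕ) (r : Finset ℕ × Finset ℕ) : Finset ℕ × Finset ℕ :=
  (r.1, insert (n+1) r.2)

lemma Icc_erase (n : ℕ) : (Finset.Icc 1 (n+1)).erase (n+1) = Finset.Icc 1 n := by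
  rw [Finset.Icc_erase_right, Finset.Ico_add_one_right_eq_Icc]

lemma Icc_insert (n : ℕ) : insert (n+1) (Finset.Icc 1 n) = Finset.Icc 1 (n+1) := by
  rw [← Finset.Ico_add_one_right_eq_Icc, Finset.Ico_insert_right]
  omega

lemma ep_mem {n : ℕ} (hn : 1 ≤ n) {p : Finset ℕ × Finset ℕ} (hp : p ∈ Fset (n+1)) :
    ep n p ∈ Fset n := by
  obtain ⟨h1, h2, h3⟩ := mem_Fset.mp hp
  rw [mem_Fset]
  refine ⟨?_, ?_, ?_⟩
  · show p.1.erase (n+1) ∪ p.2.erase (n+1) = _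
    rw [← Finset.erase_union_distrib, h1, Icc_erase]
  · show p.1.erase (n+1) ∩ p.2.erase (n+1) = ∅
    rw [Finset.eq_empty_iff_forall_notMem]
    intro x hx
    simp only [Finset.mem_inter, Finset.mem_erase] at hx
    have : x ∈ p.1 ∩ p.2 := Finset.mem_inter.mpr ⟨hx.1.2, hx.2.2⟩
    rw [h2] at this; exact absurd this (Finset.notMem_empty x)
  · exact Finset.mem_erase.mpr ⟨by omega, h3⟩

lemma notMem_of_mem_Fset {n : ℕ} {r : Finset ℕ × Finset ℕ} (hr : r ∈ Fset n) :
    (n+1) ∉ r.1 ∧ (n+1) ∉ r.2 := by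
  obtain ⟨h1, _, _⟩ := mem_Fset.mp hr
  constructor <;> intro h
  · have : n+1 ∈ Finset.Icc 1 n := h1 ▸ Finset.mem_union_left _ h
    simp at this
  · have : n+1 ∈ Finset.Icc 1 n := h1 ▸ Finset.mem_union_right _ h
    simp at this

lemma pl_mem {n : ℕ} {r : Finset ℕ × Finset ℕ} (hr : r ∈ Fset n) :
    pl n r ∈ Fset (n+1) := by
  obtain ⟨h1, h2, h3⟩ := mem_Fset.mp hr
  obtain ⟨hn1, hn2⟩ := notMem_of_mem_Fset hr
  rw [mem_Fset]
  refine ⟨?_, ?_, ?_⟩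
  · show insert (n+1) r.1 ∪ r.2 = _
    rw [Finset.insert_union, h1, Icc_insert]
  · show insert (n+1) r.1 ∩ r.2 = ∅
    rw [Finset.insert_inter_of_notMem hn2, h2]
  · exact Finset.mem_insert_of_mem h3

lemma mi_mem {n : ℕ} {r : Finset ℕ × Finset ℕ} (hr : r ∈ Fset n) :
    mi n r ∈ Fset (n+1) := by
  obtain ⟨h1, h2, h3⟩ := mem_Fset.mp hr
  obtain ⟨hn1, hn2⟩ := notMem_of_mem_Fset hr
  rw [mem_Fset]
  refine ⟨?_, ?_, ?_⟩
  · show r.1 ∪ insert (n+1) r.2 = _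
    rw [Finset.union_insert, h1, Icc_insert]
  · show r.1 ∩ insert (n+1) r.2 = ∅
    rw [Finset.inter_insert_of_notMem hn1, h2]
  · exact h3

lemma pl_ne_mi {n : ℕ} {r : Finset ℕ × Finset ℕ} (hr : r ∈ Fset n) :
    pl n r ≠ mi n r := by
  obtain ⟨hn1, _⟩ := notMem_of_mem_Fset hr
  intro h
  have : (n+1) ∈ r.1 := by
    have := congrArg Prod.fst h
    simpa [pl, mi] using this ▸ Finset.mem_insert_self (n+1) r.1
  exact hn1 this

lemma ep_pl {n : ℕ} {r : Finset ℕ × Finset ℕ} (hr : r ∈ Fset n) : ep n (pl n r) = r := by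
  obtain ⟨hn1, hn2⟩ := notMem_of_mem_Fset hr
  simp [ep, pl, Finset.erase_insert_eq_erase, Finset.erase_eq_of_notMem, hn1, hn2]

lemma ep_mi {n : ℕ} {r : Finset ℕ × Finset ℕ} (hr : r ∈ Fset n) : ep n (mi n r) = r := by
  obtain ⟨hn1, hn2⟩ := notMem_of_mem_Fset hr
  simp [ep, mi, Finset.erase_insert_eq_erase, Finset.erase_eq_of_notMem, hn1, hn2]

/-- each element of `F_{n+1}` is `pl` or `mi` of its erasure -/
lemma pl_or_mi {n : ℕ} {p : Finset ℕ × Finset ℕ} (hp : p ∈ Fset (n+1)) :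
    (n+1 ∈ p.1 ∧ p = pl n (ep n p)) ∨ (n+1 ∈ p.2 ∧ p = mi n (ep n p)) := by
  obtain ⟨h1, h2, _⟩ := mem_Fset.mp hp
  have hmem : n+1 ∈ p.1 ∪ p.2 := by
    rw [h1]; simp
  rcases Finset.mem_union.mp hmem with h | h
  · left
    have h2' : n+1 ∉ p.2 := by
      intro hc
      have : n+1 ∈ p.1 ∩ p.2 := Finset.mem_inter.mpr ⟨h, hc⟩
      rw [h2] at this; exact absurd this (Finset.notMem_empty _)
    refine ⟨h, ?_⟩
    simp [pl, ep, Finset.insert_erase h, Finset.erase_eq_of_notMem h2']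
  · right
    have h1' : n+1 ∉ p.1 := by
      intro hc
      have : n+1 ∈ p.1 ∩ p.2 := Finset.mem_inter.mpr ⟨hc, h⟩
      rw [h2] at this; exact absurd this (Finset.notMem_empty _)
    refine ⟨h, ?_⟩
    simp [mi, ep, Finset.insert_erase h, Finset.erase_eq_of_notMem h1']

/-- computation of `π̃'_*` pointwise -/
lemma piDownF_apply {n : ℕ} (hn : 1 ≤ n) (v : ↥(Fset (n+1)) → ℚ) (r : ↥(Fset n)) :
    piDownF n v r = v ⟨pl n r.val, pl_mem r.property⟩ + v ⟨mi n r.val, mi_mem r.property⟩ := by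
  set a : ↥(Fset (n+1)) := ⟨pl n r.val, pl_mem r.property⟩ with ha
  set b : ↥(Fset (n+1)) := ⟨mi n r.val, mi_mem r.property⟩ with hb
  have key : ∀ p : ↥(Fset (n+1)),
      (if r.val = (p.val.1.erase (n+1), p.val.2.erase (n+1)) then (1:ℚ) else 0) * v p
      = (if a = p then v p else 0) + (if b = p then v p else 0) := by
    intro p
    by_cases h1 : a = p
    · have h2 : b ≠ p := fun h =>
        pl_ne_mi r.property (congrArg Subtype.val (h1.trans h.symm))
      have hc : r.val = (p.val.1.erase (n+1), p.val.2.erase (n+1)) := by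
        have : p.val = pl n r.val := (congrArg Subtype.val h1).symm
        rw [this]
        exact (ep_pl r.property).symm
      simp [hc, h1, h2]
    · by_cases h2 : b = p
      · have hc : r.val = (p.val.1.erase (n+1), p.val.2.erase (n+1)) := by
          have : p.val = mi n r.val := (congrArg Subtype.val h2).symm
          rw [this]
          exact (ep_mi r.property).symm
        simp [hc, h1, h2]
      · have hc : r.val ≠ (p.val.1.erase (n+1), p.val.2.erase (n+1)) := by
          intro hc
          have hc' : ep n p.val = r.val := hc.symm
          rcases pl_or_mi p.property with ⟨_, hp⟩ | ⟨_, hp⟩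
          · exact h1 (Subtype.ext (show pl n r.val = p.val by rw [← hc']; exact hp.symm))
          · exact h2 (Subtype.ext (show mi n r.val = p.val by rw [← hc']; exact hp.symm))
        simp [hc, h1, h2]
  have : piDownF n v r = Finset.univ.sum fun p : ↥(Fset (n+1)) =>
      (if r.val = (p.val.1.erase (n+1), p.val.2.erase (n+1)) then (1:ℚ) else 0) * v p := rfl
  rw [this, Finset.sum_congr rfl (fun p _ => key p), Finset.sum_add_distrib,
    Finset.sum_ite_eq, Finset.sum_ite_eq]
  simp

/-- computation of `γ` at a `pl` basis point -/
lemma gamma_pl {n : ℕ} (w : ↥(Fset n) → ℚ) (r : ↥(Fset n)) :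
    gammaMap n w ⟨pl n r.val, pl_mem r.property⟩ = w r := by
  have key : ∀ p : ↥(Fset n),
      ((if pl n r.val = (insert (n+1) p.val.1, p.val.2) then (1:ℚ) else 0)
        - (if pl n r.val = (p.val.1, insert (n+1) p.val.2) then (1:ℚ) else 0)) * w p
      = (if r = p then w p else 0) := by
    intro p
    have c2 : pl n r.val ≠ (p.val.1, insert (n+1) p.val.2) := by
      intro h
      have := congrArg Prod.fst h
      simp only [pl] at this
      exact (notMem_of_mem_Fset p.property).1 (this ▸ Finset.mem_insert_self (n+1) r.val.1)
    by_cases h1 : r = p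
    · subst h1
      have c1 : pl n r.val = (insert (n+1) r.val.1, r.val.2) := rfl
      simp [c1, c2, (notMem_of_mem_Fset r.property).1]
    · have c1 : pl n r.val ≠ (insert (n+1) p.val.1, p.val.2) := by
        intro h
        have hpp : pl n r.val = pl n p.val := h
        exact h1 (Subtype.ext (by rw [← ep_pl r.property, hpp, ep_pl p.property]))
      simp [c1, c2, h1]
  have : gammaMap n w ⟨pl n r.val, pl_mem r.property⟩ = Finset.univ.sum fun p : ↥(Fset n) =>
      ((if pl n r.val = (insert (n+1) p.val.1, p.val.2) then (1:ℚ) else 0)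
        - (if pl n r.val = (p.val.1, insert (n+1) p.val.2) then (1:ℚ) else 0)) * w p := rfl
  rw [this, Finset.sum_congr rfl (fun p _ => key p), Finset.sum_ite_eq]
  simp

/-- computation of `γ` at a `mi` basis point -/
lemma gamma_mi {n : ℕ} (w : ↥(Fset n) → ℚ) (r : ↥(Fset n)) :
    gammaMap n w ⟨mi n r.val, mi_mem r.property⟩ = - w r := by
  have key : ∀ p : ↥(Fset n),
      ((if mi n r.val = (insert (n+1) p.val.1, p.val.2) then (1:ℚ) else 0)
        - (if mi n r.val = (p.val.1, insert (n+1) p.val.2) then (1:ℚ) else 0)) * w p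
      = (if r = p then - w p else 0) := by
    intro p
    have c1 : mi n r.val ≠ (insert (n+1) p.val.1, p.val.2) := by
      intro h
      have := congrArg Prod.fst h
      simp only [mi] at this
      exact (notMem_of_mem_Fset r.property).1 (this ▸ Finset.mem_insert_self (n+1) p.val.1)
    by_cases h1 : r = p
    · subst h1
      have c2 : mi n r.val = (r.val.1, insert (n+1) r.val.2) := rfl
      simp [c1, c2, (notMem_of_mem_Fset r.property).2]
    · have c2 : mi n r.val ≠ (p.val.1, insert (n+1) p.val.2) := by
        intro h
        have : mi n r.val = mi n p.val := h
        exact h1 (Subtype.ext (by rw [← ep_mi r.property, this, ep_mi p.property]))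
      simp [c1, c2, h1]
  have : gammaMap n w ⟨mi n r.val, mi_mem r.property⟩ = Finset.univ.sum fun p : ↥(Fset n) =>
      ((if mi n r.val = (insert (n+1) p.val.1, p.val.2) then (1:ℚ) else 0)
        - (if mi n r.val = (p.val.1, insert (n+1) p.val.2) then (1:ℚ) else 0)) * w p := rfl
  rw [this, Finset.sum_congr rfl (fun p _ => key p), Finset.sum_ite_eq]
  simp

end S13

/-- For every `n ≥ 1`, the sequence
`ℚF_n →^γ ℚF_{n+1} →^{π̃'_*} ℚF_n → 0` is exact: `π̃'_*` is surjective and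
`ker π̃'_* = im γ`. -/
theorem statement13 (n : ℕ) (hn : 1 ≤ n) :
    Function.Surjective (piDownF n) ∧
    LinearMap.ker (piDownF n) = LinearMap.range (gammaMap n) := by
  constructor
  · intro v
    refine ⟨fun q => if n+1 ∈ q.val.1 then v ⟨S13.ep n q.val, S13.ep_mem hn q.property⟩ else 0, ?_⟩
    funext r
    rw [S13.piDownF_apply hn]
    have h1 : n+1 ∈ (S13.pl n r.val).1 := Finset.mem_insert_self _ _
    have h2 : n+1 ∉ (S13.mi n r.val).1 := (S13.notMem_of_mem_Fset r.property).1
    simp only [h1, h2, if_pos, if_neg, if_true, if_false, add_zero]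
    have : (⟨S13.ep n (S13.pl n r.val), S13.ep_mem hn (S13.pl_mem r.property)⟩ : ↥(Fset n)) = r :=
      Subtype.ext (S13.ep_pl r.property)
    rw [this]
  · apply le_antisymm
    · intro v hv
      rw [LinearMap.mem_ker] at hv
      refine ⟨fun r => v ⟨S13.pl n r.val, S13.pl_mem r.property⟩, ?_⟩
      funext q
      rcases S13.pl_or_mi q.property with ⟨_, hq⟩ | ⟨_, hq⟩
      · have hq' : q = ⟨S13.pl n (S13.ep n q.val), S13.pl_mem (S13.ep_mem hn q.property)⟩ :=
          Subtype.ext hq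
        rw [hq']
        exact S13.gamma_pl _ ⟨S13.ep n q.val, S13.ep_mem hn q.property⟩
      · have hq' : q = ⟨S13.mi n (S13.ep n q.val), S13.mi_mem (S13.ep_mem hn q.property)⟩ :=
          Subtype.ext hq
        have hker := congrFun hv ⟨S13.ep n q.val, S13.ep_mem hn q.property⟩
        rw [S13.piDownF_apply hn] at hker
        simp only [Pi.zero_apply] at hker
        rw [hq']
        have hlin : -(v ⟨S13.pl n (S13.ep n q.val), S13.pl_mem (S13.ep_mem hn q.property)⟩)
            = v ⟨S13.mi n (S13.ep n q.val), S13.mi_mem (S13.ep_mem hn q.property)⟩ := by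
          linarith
        exact (S13.gamma_mi _ ⟨S13.ep n q.val, S13.ep_mem hn q.property⟩).trans hlin
    · rintro v ⟨w, rfl⟩
      rw [LinearMap.mem_ker]
      funext r
      rw [S13.piDownF_apply hn, S13.gamma_pl, S13.gamma_mi]
      simp
end
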